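/- arXiv:math/0411438 — 9 statements merged into one kernel-verified Lean document; each statement's English description precedes it below -/
import Mathlib

section
/- Let q₀ : ℝ → ℝ be a measurable probability density with q₀(x) > 0 for every x, and let r₀ : ℝ → ℝ be measurable with ∫ r₀(x)²/q₀(x) dx < ∞. Let G be a probability measure on ℝ and define q(x) = ∫ q₀(x − y) dG(y) and r(x) = ∫ r₀(x − y) dG(y) (the latter interpreted as 0 at points x where the integral is not absolutely convergent). Then q(x) > 0 for every x and ∫ r(x)²/q(x) dx ≤ ∫ r₀(x)²/q₀(x) dx. (This is the content of Theorem 3.1: the Fisher information of a model whose densities are mixtures/convolutions of a base model's densities is dominated by the Fisher information of the base model, applied with r₀ an arbitrary linear combination u·∂_σ p + v·∂_β p of the score functions.) -/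
/-!
For each `x`, Cauchy–Schwarz with weight `q₀(x - ·)` bounds `r(x)² / q(x)` by the
`G`-average of `r₀²/q₀` at `x - ·`, since `r₀ = √(r₀²/q₀) · √q₀`. Integrating in `x` and using
Tonelli and translation invariance of Lebesgue measure, the right-hand side integrates to
`∫ r₀²/q₀`. No integrability of `r₀(x - ·)` is needed, because `‖∫ f‖ ≤ ∫⁻ ‖f‖` also holds
when the Bochner integral takes its junk value `0`.
-/

open MeasureTheory
open scoped ENNReal

theorem MeasureTheory.lintegral_pos_of_forall_ne_zero {α : Type*} [MeasurableSpace α]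
    {μ : Measure α} [NeZero μ] {f : α → ℝ≥0∞} (hf : AEMeasurable f μ) (hpos : ∀ x, f x ≠ 0) :
    0 < ∫⁻ x, f x ∂μ := by
  refine pos_iff_ne_zero.2 fun h => ?_
  have hzero : ∀ᵐ x ∂μ, False := by
    filter_upwards [(lintegral_eq_zero_iff' hf).1 h] with x hx using hpos x hx
  exact NeZero.ne μ (ae_eq_bot.1 (Filter.eventually_false_iff_eq_bot.1 hzero))

theorem ENNReal.sq_lintegral_mul_le {α : Type*} [MeasurableSpace α] (μ : Measure α)
    {f g : α → ℝ≥0∞} (hf : AEMeasurable f μ) (hg : AEMeasurable g μ) :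
    (∫⁻ x, f x * g x ∂μ) ^ 2 ≤ (∫⁻ x, f x ^ 2 ∂μ) * ∫⁻ x, g x ^ 2 ∂μ := by
  have hCS := ENNReal.lintegral_mul_le_Lp_mul_Lq μ Real.HolderConjugate.two_two hf hg
  simp only [ENNReal.rpow_two] at hCS
  calc (∫⁻ x, f x * g x ∂μ) ^ 2
      ≤ ((∫⁻ x, f x ^ 2 ∂μ) ^ (1 / 2 : ℝ) * (∫⁻ x, g x ^ 2 ∂μ) ^ (1 / 2 : ℝ)) ^ 2 :=
        pow_le_pow_left₀ bot_le hCS 2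
    _ = (∫⁻ x, f x ^ 2 ∂μ) * ∫⁻ x, g x ^ 2 ∂μ := by
        rw [mul_pow, ← ENNReal.rpow_natCast, ← ENNReal.rpow_natCast, ← ENNReal.rpow_mul,
          ← ENNReal.rpow_mul]
        norm_num

theorem ENNReal.sq_lintegral_le_lintegral_sq_div_mul {α : Type*} [MeasurableSpace α]
    (μ : Measure α) {f g : α → ℝ≥0∞} (hf : AEMeasurable f μ) (hg : AEMeasurable g μ)
    (hg0 : ∀ x, g x ≠ 0) (hgtop : ∀ x, g x ≠ ∞) :
    (∫⁻ x, f x ∂μ) ^ 2 ≤ (∫⁻ x, f x ^ 2 / g x ∂μ) * ∫⁻ x, g x ∂μ := by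
  have sq_rpow_half (a : ℝ≥0∞) : (a ^ (1 / 2 : ℝ)) ^ 2 = a := by
    rw [← ENNReal.rpow_natCast, ← ENNReal.rpow_mul]; norm_num
  have hfactor : ∀ x, f x = (f x ^ 2 / g x) ^ (1 / 2 : ℝ) * g x ^ (1 / 2 : ℝ) := fun x => by
    rw [← ENNReal.mul_rpow_of_nonneg _ _ (by norm_num), ENNReal.div_mul_cancel (hg0 x) (hgtop x),
      ← ENNReal.rpow_natCast, ← ENNReal.rpow_mul]
    norm_num
  have hf_sq_div : AEMeasurable (fun x => f x ^ 2 / g x) μ := (hf.pow_const 2).div hg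
  calc (∫⁻ x, f x ∂μ) ^ 2
      = (∫⁻ x, (f x ^ 2 / g x) ^ (1 / 2 : ℝ) * g x ^ (1 / 2 : ℝ) ∂μ) ^ 2 := by
        simp only [← hfactor]
    _ ≤ _ := ENNReal.sq_lintegral_mul_le μ (hf_sq_div.pow_const _) (hg.pow_const _)
    _ = (∫⁻ x, f x ^ 2 / g x ∂μ) * ∫⁻ x, g x ∂μ := by simp only [sq_rpow_half]

theorem ofReal_sq_integral_le_lintegral_sq_div_mul {α : Type*} [MeasurableSpace α]
    (μ : Measure α) {f g : α → ℝ} (hf : AEMeasurable f μ) (hg : AEMeasurable g μ)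
    (hgpos : ∀ x, 0 < g x) :
    ENNReal.ofReal ((∫ x, f x ∂μ) ^ 2) ≤
      (∫⁻ x, ENNReal.ofReal (f x ^ 2 / g x) ∂μ) * ∫⁻ x, ENNReal.ofReal (g x) ∂μ := by
  have ofReal_sq (a : ℝ) : ENNReal.ofReal (a ^ 2) = ‖a‖ₑ ^ 2 := by
    rw [Real.enorm_eq_ofReal_abs, ← ENNReal.ofReal_pow (abs_nonneg a), sq_abs]
  have hdiv : ∀ x, ENNReal.ofReal (f x ^ 2 / g x) = ‖f x‖ₑ ^ 2 / ENNReal.ofReal (g x) :=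
    fun x => by rw [ENNReal.ofReal_div_of_pos (hgpos x), ofReal_sq]
  calc ENNReal.ofReal ((∫ x, f x ∂μ) ^ 2)
      = ‖∫ x, f x ∂μ‖ₑ ^ 2 := ofReal_sq _
    _ ≤ (∫⁻ x, ‖f x‖ₑ ∂μ) ^ 2 := pow_le_pow_left₀ bot_le (enorm_integral_le_lintegral_enorm f) 2
    _ ≤ _ := ENNReal.sq_lintegral_le_lintegral_sq_div_mul μ hf.enorm hg.ennreal_ofReal
        (fun x => (ENNReal.ofReal_pos.2 (hgpos x)).ne') (fun _ => ENNReal.ofReal_ne_top)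
    _ = _ := by simp only [hdiv]

theorem MeasureTheory.lintegral_lintegral_sub_eq_mul {E : Type*} [MeasurableSpace E] [AddGroup E]
    [MeasurableAdd E] [MeasurableSub₂ E] (μ : Measure E) [SFinite μ] [μ.IsAddRightInvariant]
    (ν : Measure E) [SFinite ν] {F : E → ℝ≥0∞} (hF : Measurable F) :
    ∫⁻ x, ∫⁻ y, F (x - y) ∂ν ∂μ = ν Set.univ * ∫⁻ x, F x ∂μ := by
  rw [lintegral_lintegral_swap (f := fun x y => F (x - y)) (hF.comp measurable_sub).aemeasurable]
  simp only [lintegral_sub_right_eq_self, lintegral_const, mul_comm]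

theorem stmt_0_general (q₀ r₀ : ℝ → ℝ) (hq₀m : Measurable q₀) (hq₀pos : ∀ x, 0 < q₀ x)
    (hr₀m : Measurable r₀)
    (G : Measure ℝ) [IsProbabilityMeasure G] :
    (∀ x : ℝ, 0 < ∫⁻ y, ENNReal.ofReal (q₀ (x - y)) ∂G) ∧
      ∫⁻ x, ENNReal.ofReal ((∫ y, r₀ (x - y) ∂G) ^ 2) /
          (∫⁻ y, ENNReal.ofReal (q₀ (x - y)) ∂G)
        ≤ ∫⁻ x, ENNReal.ofReal ((r₀ x) ^ 2 / q₀ x) := by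
  have hshift {f : ℝ → ℝ} (hf : Measurable f) (x : ℝ) : AEMeasurable (fun y => f (x - y)) G :=
    (hf.comp (measurable_const.sub measurable_id)).aemeasurable
  have hfisher : Measurable fun z => ENNReal.ofReal (r₀ z ^ 2 / q₀ z) := by fun_prop
  refine ⟨fun x => lintegral_pos_of_forall_ne_zero (hshift hq₀m x).ennreal_ofReal
    fun y => (ENNReal.ofReal_pos.2 (hq₀pos _)).ne', ?_⟩
  calc ∫⁻ x, ENNReal.ofReal ((∫ y, r₀ (x - y) ∂G) ^ 2) / ∫⁻ y, ENNReal.ofReal (q₀ (x - y)) ∂G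
      ≤ ∫⁻ x, ∫⁻ y, ENNReal.ofReal (r₀ (x - y) ^ 2 / q₀ (x - y)) ∂G :=
        lintegral_mono fun x => ENNReal.div_le_of_le_mul <|
          ofReal_sq_integral_le_lintegral_sq_div_mul G (hshift hr₀m x) (hshift hq₀m x)
            fun y => hq₀pos (x - y)
    _ = ∫⁻ x, ENNReal.ofReal (r₀ x ^ 2 / q₀ x) := by
        rw [lintegral_lintegral_sub_eq_mul volume G hfisher, measure_univ, one_mul]

/-- Fisher information of a convolution/mixture model is dominated by that of the base model. -/
theorem stmt_0 (q₀ r₀ : ℝ → ℝ) (hq₀m : Measurable q₀) (hq₀pos : ∀ x, 0 < q₀ x)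
    (hq₀dens : ∫⁻ x, ENNReal.ofReal (q₀ x) = 1)
    (hr₀m : Measurable r₀)
    (hfin : ∫⁻ x, ENNReal.ofReal ((r₀ x) ^ 2 / q₀ x) < ⊤)
    (G : Measure ℝ) [IsProbabilityMeasure G] :
    (∀ x : ℝ, 0 < ∫⁻ y, ENNReal.ofReal (q₀ (x - y)) ∂G) ∧
      ∫⁻ x, ENNReal.ofReal ((∫ y, r₀ (x - y) ∂G) ^ 2) /
          (∫⁻ y, ENNReal.ofReal (q₀ (x - y)) ∂G)
        ≤ ∫⁻ x, ENNReal.ofReal ((r₀ x) ^ 2 / q₀ x) :=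
  stmt_0_general q₀ r₀ hq₀m hq₀pos hr₀m G
end

section
/- Let F be a nonnegative measure on ℝ, let α > 1, and let φ : (0,1] → [0,∞) be increasing with F({y : |y| > x}) ≤ φ(x)/x^α for all x ∈ (0,1]. Then for every ε ∈ (0,1], ∫_{{y : ε < |y| ≤ 1}} |y| dF(y) ≤ ε^{1−α} · ( φ(ε) + φ(√ε)/(α − 1) + φ(1)·ε^{(α−1)/2}/(α − 1) ). -/
/-! By the layer-cake formula the integral is `∫₀¹ F(ε < |y| ≤ 1, |y| > t) dt`. On `(0, ε]` the
integrand is at most `F(|y| > ε) ≤ φ(ε) ε^(-α)`; on `(ε, √ε]` and `(√ε, 1]` it is at most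
`φ(√ε) t^(-α)` and `φ(1) t^(-α)` by monotonicity of `φ`, and `∫_a^∞ t^(-α) dt = a^(1-α)/(α-1)`.
Splitting at `√ε` means only `φ(√ε)` pays the full `ε^(1-α)`, while `φ(1)` gains `ε^((α-1)/2)`. -/

open MeasureTheory Set

lemma lintegral_Ioi_ofReal_rpow_neg {α a : ℝ} (hα : 1 < α) (ha : 0 < a) :
    ∫⁻ t in Ioi a, ENNReal.ofReal (t ^ (-α)) = ENNReal.ofReal (a ^ (1 - α) / (α - 1)) := by
  have hint : IntegrableOn (fun t : ℝ ↦ t ^ (-α)) (Ioi a) :=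
    integrableOn_Ioi_rpow_of_lt (by linarith) ha
  rw [← ofReal_integral_eq_lintegral_ofReal hint, integral_Ioi_rpow_of_lt (by linarith) ha]
  · congr 1
    rw [show -α + 1 = 1 - α by ring, neg_div, ← div_neg, neg_sub]
  · filter_upwards [ae_restrict_mem measurableSet_Ioi] with t ht
    exact Real.rpow_nonneg (ha.trans ht).le _

lemma lintegral_ofReal_abs_le_lintegral_Ioc_tail {ν : Measure ℝ} {r : ℝ} (hr : 0 ≤ r)
    (hν : ∀ᵐ y ∂ν, |y| ≤ r) :
    ∫⁻ y, ENNReal.ofReal |y| ∂ν ≤ ∫⁻ t in Ioc 0 r, ν {y | t < |y|} := by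
  have htail : ∫⁻ t in Ioi r, ν {y | t < |y|} = 0 := by
    refine (setLIntegral_congr_fun measurableSet_Ioi fun t (ht : r < t) ↦ ?_).trans lintegral_zero
    exact measure_eq_zero_iff_ae_notMem.2 <| hν.mono fun y hy (h : t < |y|) ↦ by linarith
  rw [lintegral_eq_lintegral_meas_lt ν (ae_of_all _ abs_nonneg) continuous_abs.aemeasurable,
    ← Ioc_union_Ioi_eq_Ioi hr]
  calc _ ≤ _ := lintegral_union_le _ _ _
    _ = _ := by rw [htail, add_zero]

section TailBound

variable {μ : Measure ℝ} {α : ℝ} {φ : ℝ → ℝ}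

lemma lintegral_Ioc_zero_tail_le
    (hμ : ∀ x ∈ Ioc (0 : ℝ) 1, μ {y | x < |y|} ≤ ENNReal.ofReal (φ x / x ^ α))
    {ε : ℝ} (hε : ε ∈ Ioc (0 : ℝ) 1) (hμε : ∀ᵐ y ∂μ, ε < |y|) :
    ∫⁻ t in Ioc 0 ε, μ {y | t < |y|} ≤ ENNReal.ofReal (φ ε * ε ^ (1 - α)) := by
  calc ∫⁻ t in Ioc 0 ε, μ {y | t < |y|} ≤ ∫⁻ _ in Ioc 0 ε, ENNReal.ofReal (φ ε / ε ^ α) :=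
        setLIntegral_mono measurable_const fun t ht ↦
          (measure_mono_ae <| hμε.mono fun y hy _ ↦ hy).trans (hμ ε hε)
    _ = ENNReal.ofReal (φ ε * ε ^ (1 - α)) := by
      rw [setLIntegral_const, Real.volume_Ioc, sub_zero, ← ENNReal.ofReal_mul' hε.1.le,
        Real.rpow_sub hε.1, Real.rpow_one]
      ring_nf

lemma lintegral_Ioc_tail_le (hα : 1 < α)
    (hφ0 : ∀ x ∈ Ioc (0 : ℝ) 1, 0 ≤ φ x) (hφmono : MonotoneOn φ (Ioc (0 : ℝ) 1))
    (hμ : ∀ x ∈ Ioc (0 : ℝ) 1, μ {y | x < |y|} ≤ ENNReal.ofReal (φ x / x ^ α))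
    {a b : ℝ} (ha : 0 < a) (hb : b ≤ 1) :
    ∫⁻ t in Ioc a b, μ {y | t < |y|} ≤ ENNReal.ofReal (φ b * (a ^ (1 - α) / (α - 1))) := by
  rcases lt_or_ge b a with hba | hab
  · simp [Ioc_eq_empty_of_le hba.le]
  have hbmem : b ∈ Ioc (0 : ℝ) 1 := ⟨ha.trans_le hab, hb⟩
  have hpoint : ∀ t ∈ Ioc a b,
      μ {y | t < |y|} ≤ ENNReal.ofReal (φ b) * ENNReal.ofReal (t ^ (-α)) := by
    intro t ht
    have htmem : t ∈ Ioc (0 : ℝ) 1 := ⟨ha.trans ht.1, ht.2.trans hb⟩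
    refine (hμ t htmem).trans ?_
    rw [← ENNReal.ofReal_mul (hφ0 b hbmem), Real.rpow_neg htmem.1.le, ← div_eq_mul_inv]
    exact ENNReal.ofReal_le_ofReal <| div_le_div_of_nonneg_right (hφmono htmem hbmem ht.2)
      (Real.rpow_nonneg htmem.1.le _)
  calc ∫⁻ t in Ioc a b, μ {y | t < |y|}
      ≤ ∫⁻ t in Ioc a b, ENNReal.ofReal (φ b) * ENNReal.ofReal (t ^ (-α)) :=
        setLIntegral_mono' measurableSet_Ioc hpoint
    _ ≤ ∫⁻ t in Ioi a, ENNReal.ofReal (φ b) * ENNReal.ofReal (t ^ (-α)) :=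
        lintegral_mono_set Ioc_subset_Ioi_self
    _ = ENNReal.ofReal (φ b * (a ^ (1 - α) / (α - 1))) := by
      rw [lintegral_const_mul' _ _ ENNReal.ofReal_ne_top, lintegral_Ioi_ofReal_rpow_neg hα ha,
        ← ENNReal.ofReal_mul (hφ0 b hbmem)]

lemma lintegral_Ioc_zero_one_tail_le (hα : 1 < α)
    (hφ0 : ∀ x ∈ Ioc (0 : ℝ) 1, 0 ≤ φ x) (hφmono : MonotoneOn φ (Ioc (0 : ℝ) 1))
    (hμ : ∀ x ∈ Ioc (0 : ℝ) 1, μ {y | x < |y|} ≤ ENNReal.ofReal (φ x / x ^ α))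
    {ε z : ℝ} (hε : ε ∈ Ioc (0 : ℝ) 1) (hμε : ∀ᵐ y ∂μ, ε < |y|) (hεz : ε ≤ z) (hz : z ≤ 1) :
    ∫⁻ t in Ioc 0 1, μ {y | t < |y|} ≤ ENNReal.ofReal (φ ε * ε ^ (1 - α)
      + φ z * (ε ^ (1 - α) / (α - 1)) + φ 1 * (z ^ (1 - α) / (α - 1))) := by
  have hz0 : 0 < z := hε.1.trans_le hεz
  have hα1 : 0 ≤ α - 1 := sub_nonneg.2 hα.le
  have hA : 0 ≤ φ ε * ε ^ (1 - α) := mul_nonneg (hφ0 ε hε) (Real.rpow_nonneg hε.1.le _)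
  have hB : 0 ≤ φ z * (ε ^ (1 - α) / (α - 1)) :=
    mul_nonneg (hφ0 z ⟨hz0, hz⟩) (div_nonneg (Real.rpow_nonneg hε.1.le _) hα1)
  rw [ENNReal.ofReal_add (add_nonneg hA hB), ENNReal.ofReal_add hA hB,
    ← Ioc_union_Ioc_eq_Ioc hz0.le hz, ← Ioc_union_Ioc_eq_Ioc hε.1.le hεz]
  · refine (lintegral_union_le _ _ _).trans (add_le_add ?_ ?_)
    · refine (lintegral_union_le _ _ _).trans (add_le_add ?_ ?_)
      · exact lintegral_Ioc_zero_tail_le hμ hε hμε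
      · exact lintegral_Ioc_tail_le hα hφ0 hφmono hμ hε.1 hz
    · exact lintegral_Ioc_tail_le hα hφ0 hφmono hμ hz0 le_rfl
  · exact mul_nonneg (hφ0 1 (right_mem_Ioc.2 one_pos)) (div_nonneg (by positivity) hα1)

end TailBound

/-- First-moment estimate away from 0 for a Lévy measure dominated by an α-stable tail,
case α > 1 (Lemma 7.1, eq. Fmoments_awayfrom0). -/
theorem stmt_3 (F : Measure ℝ) (α : ℝ) (hα : 1 < α)
    (φ : ℝ → ℝ) (hφ0 : ∀ x ∈ Set.Ioc (0:ℝ) 1, 0 ≤ φ x)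
    (hφmono : MonotoneOn φ (Set.Ioc (0:ℝ) 1))
    (hF : ∀ x ∈ Set.Ioc (0:ℝ) 1, F {y | x < |y|} ≤ ENNReal.ofReal (φ x / x ^ α))
    (ε : ℝ) (hε : ε ∈ Set.Ioc (0:ℝ) 1) :
    ∫⁻ y in {y : ℝ | ε < |y| ∧ |y| ≤ 1}, ENNReal.ofReal |y| ∂F
      ≤ ENNReal.ofReal (ε ^ (1 - α) *
          (φ ε + φ (Real.sqrt ε) / (α - 1) + φ 1 * ε ^ ((α - 1) / 2) / (α - 1))) := by
  obtain ⟨hε0, hε1⟩ := hε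
  have hsε : ε ≤ Real.sqrt ε := (Real.le_sqrt' hε0).2 (by nlinarith)
  have hs1 : Real.sqrt ε ≤ 1 := Real.sqrt_le_one.2 hε1
  have hsα : Real.sqrt ε ^ (1 - α) = ε ^ (1 - α) * ε ^ ((α - 1) / 2) := by
    rw [Real.sqrt_eq_rpow, ← Real.rpow_mul hε0.le, ← Real.rpow_add hε0]
    congr 1
    ring
  set μ := F.restrict {y : ℝ | ε < |y| ∧ |y| ≤ 1}
  have hμS : ∀ᵐ y ∂μ, ε < |y| ∧ |y| ≤ 1 :=
    ae_restrict_mem ((measurableSet_lt measurable_const continuous_abs.measurable).inter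
      (measurableSet_le continuous_abs.measurable measurable_const))
  have hμ : ∀ x ∈ Ioc (0 : ℝ) 1, μ {y | x < |y|} ≤ ENNReal.ofReal (φ x / x ^ α) :=
    fun x hx ↦ (Measure.restrict_apply_le _ _).trans (hF x hx)
  calc ∫⁻ y, ENNReal.ofReal |y| ∂μ ≤ ∫⁻ t in Ioc 0 1, μ {y | t < |y|} :=
        lintegral_ofReal_abs_le_lintegral_Ioc_tail zero_le_one (hμS.mono fun _ hy ↦ hy.2)
    _ ≤ _ := lintegral_Ioc_zero_one_tail_le hα hφ0 hφmono hμ ⟨hε0, hε1⟩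
        (hμS.mono fun _ hy ↦ hy.1) hsε hs1
    _ = _ := by
      rw [hsα]
      congr 1
      ring
end

section
/- Let h : ℝ → ℝ be an even, differentiable probability density with h(w) > 0 for all w; set h̆(w) = h(w) + w·h′(w), and assume I(h) = ∫ h̆²/h dw < ∞, J(h) = ∫ (h′)²/h dw < ∞ and ∫ |h̆(w)·h′(w)|/h(w) dw < ∞. Fix σ > 0, c > 0, d > 0, θ ∈ ℝ, and define p(x) = (1/(σc))·h((x − θd)/(σc)), with scores r_σ(x) = −(1/(σ²c))·h̆((x − θd)/(σc)) (the σ-derivative of p) and r_θ(x) = −(d/(σ²c²))·h′((x − θd)/(σc)) (the θ-derivative of p). Then ∫ r_σ(x)²/p(x) dx = I(h)/σ², ∫ r_θ(x)²/p(x) dx = (d²/(σ²c²))·J(h), and ∫ r_σ(x)·r_θ(x)/p(x) dx = 0. -/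
open MeasureTheory Filter Topology

/-!
Substituting `w = (x - θd)/(σc)` turns each entry into a constant times the corresponding
integral over `h`. For the cross term, `h` even makes `h'` odd and `h̆ = h + w h'` even, so the
integrand `h̆ h' / h` is odd and integrates to zero.
-/

theorem Function.Even.deriv_odd {f : ℝ → ℝ} (hf : f.Even) : (deriv f).Odd := fun x => by
  conv_lhs => rw [← show (fun y => f (-y)) = f from funext hf]
  rw [deriv_comp_neg, neg_neg]

theorem Function.Odd.integral_eq_zero {G E : Type*} [MeasurableSpace G] [AddGroup G]
    [MeasurableNeg G] [NormedAddCommGroup E] [NormedSpace ℝ E] {μ : Measure G}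
    [μ.IsNegInvariant] {f : G → E} (hf : f.Odd) : ∫ x, f x ∂μ = 0 := by
  have h := integral_neg_eq_self f μ
  rw [show (fun x => f (-x)) = fun x => -f x from funext hf, integral_neg] at h
  have h2 : (2 : ℝ) • ∫ x, f x ∂μ = 0 := by
    rw [two_smul]
    nth_rewrite 1 [← h]
    exact neg_add_cancel _
  exact (smul_eq_zero.mp h2).resolve_left two_ne_zero

theorem integral_comp_sub_div (F : ℝ → ℝ) {a : ℝ} (ha : 0 < a) (b : ℝ) :
    ∫ x, F ((x - b) / a) = a * ∫ w, F w := by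
  rw [integral_sub_right_eq_self (fun x => F (x / a)), Measure.integral_comp_div,
    abs_of_pos ha, smul_eq_mul]

theorem integral_comp_sub_div_div_rescaled (g F : ℝ → ℝ) {a : ℝ} (ha : 0 < a) (b : ℝ) :
    ∫ x, F ((x - b) / a) / (1 / a * g ((x - b) / a)) = a ^ 2 * ∫ w, F w / g w := by
  have hpt : ∀ y, F y / (1 / a * g y) = a * (F y / g y) := fun y => by
    simp only [div_eq_mul_inv, mul_inv, inv_inv]; ring
  simp_rw [hpt, integral_const_mul]
  rw [integral_comp_sub_div (fun w => F w / g w) ha, ← mul_assoc, sq]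

theorem stmt_6_general (h : ℝ → ℝ) (heven : ∀ w, h (-w) = h w)
    (σ c d θ : ℝ) (hσ : 0 < σ) (hc : 0 < c) :
    (∫ x : ℝ, ((1 / (σ ^ 2 * c)) *
          (h ((x - θ * d) / (σ * c)) +
            ((x - θ * d) / (σ * c)) * deriv h ((x - θ * d) / (σ * c)))) ^ 2 /
        ((1 / (σ * c)) * h ((x - θ * d) / (σ * c)))
      = (∫ w, (h w + w * deriv h w) ^ 2 / h w) / σ ^ 2) ∧
    (∫ x : ℝ, ((d / (σ ^ 2 * c ^ 2)) * deriv h ((x - θ * d) / (σ * c))) ^ 2 /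
        ((1 / (σ * c)) * h ((x - θ * d) / (σ * c)))
      = (d ^ 2 / (σ ^ 2 * c ^ 2)) * ∫ w, (deriv h w) ^ 2 / h w) ∧
    (∫ x : ℝ, (-(1 / (σ ^ 2 * c)) *
          (h ((x - θ * d) / (σ * c)) +
            ((x - θ * d) / (σ * c)) * deriv h ((x - θ * d) / (σ * c)))) *
        (-(d / (σ ^ 2 * c ^ 2)) * deriv h ((x - θ * d) / (σ * c))) /
        ((1 / (σ * c)) * h ((x - θ * d) / (σ * c)))
      = 0) := by
  have hderiv : (deriv h).Odd := Function.Even.deriv_odd heven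
  have key := fun F => integral_comp_sub_div_div_rescaled h F (mul_pos hσ hc) (θ * d)
  refine ⟨(key fun w => (1 / (σ ^ 2 * c) * (h w + w * deriv h w)) ^ 2).trans ?_,
    (key fun w => (d / (σ ^ 2 * c ^ 2) * deriv h w) ^ 2).trans ?_,
    (key fun w => -(1 / (σ ^ 2 * c)) * (h w + w * deriv h w) *
      (-(d / (σ ^ 2 * c ^ 2)) * deriv h w)).trans ?_⟩
  · simp_rw [mul_pow, mul_div_assoc, integral_const_mul]
    field_simp
  · simp_rw [mul_pow, mul_div_assoc, integral_const_mul]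
    field_simp
  · rw [Function.Odd.integral_eq_zero (fun w => by rw [heven, hderiv]; ring), mul_zero]

/-- Theorem 5.1 (stable plus drift): the 2×2 Fisher information matrix for (σ, θ)
in the location-scale family x ↦ (1/(σc))·h((x − θd)/(σc)) is diagonal with entries
I(h)/σ² and (d²/(σ²c²))·J(h). -/
theorem stmt_6 (h : ℝ → ℝ) (heven : ∀ w, h (-w) = h w)
    (hdiff : Differentiable ℝ h) (hpos : ∀ w, 0 < h w) (hdens : ∫ w, h w = 1)
    (hI : Integrable (fun w => (h w + w * deriv h w) ^ 2 / h w))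
    (hJ : Integrable (fun w => (deriv h w) ^ 2 / h w))
    (hX : Integrable (fun w => |(h w + w * deriv h w) * deriv h w| / h w))
    (σ c d θ : ℝ) (hσ : 0 < σ) (hc : 0 < c) (hd : 0 < d) :
    (∫ x : ℝ, ((1 / (σ ^ 2 * c)) *
          (h ((x - θ * d) / (σ * c)) +
            ((x - θ * d) / (σ * c)) * deriv h ((x - θ * d) / (σ * c)))) ^ 2 /
        ((1 / (σ * c)) * h ((x - θ * d) / (σ * c)))
      = (∫ w, (h w + w * deriv h w) ^ 2 / h w) / σ ^ 2) ∧
    (∫ x : ℝ, ((d / (σ ^ 2 * c ^ 2)) * deriv h ((x - θ * d) / (σ * c))) ^ 2 /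
        ((1 / (σ * c)) * h ((x - θ * d) / (σ * c)))
      = (d ^ 2 / (σ ^ 2 * c ^ 2)) * ∫ w, (deriv h w) ^ 2 / h w) ∧
    (∫ x : ℝ, (-(1 / (σ ^ 2 * c)) *
          (h ((x - θ * d) / (σ * c)) +
            ((x - θ * d) / (σ * c)) * deriv h ((x - θ * d) / (σ * c)))) *
        (-(d / (σ ^ 2 * c ^ 2)) * deriv h ((x - θ * d) / (σ * c))) /
        ((1 / (σ * c)) * h ((x - θ * d) / (σ * c)))
      = 0) :=
  stmt_6_general h heven σ c d θ hσ hc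
end

section
/- Let h : ℝ → ℝ be a differentiable probability density with h(w) > 0 for all w and J(h) = ∫ h′(w)²/h(w) dw < ∞. Let G be a probability measure on ℝ with ∫ y² dG(y) < ∞, let s > 0 and θ ∈ ℝ, and define p(x) = (1/s)∫ h((x − θy)/s) dG(y) and D(x) = (1/s²)∫ y·h′((x − θy)/s) dG(y). Then ∫ D(x)²/p(x) dx ≤ (J(h)/s²)·∫ y² dG(y). -/
/-!
Write `u = (x - θy)/s` and `q = h'²/h`. For fixed `x`, Cauchy–Schwarz under `G`, applied to
`y h'(u) = (y h'(u)/√h(u)) · √h(u)`, bounds the integrand `D(x)²/p(x)` by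
`s⁻³ ∫ y² q(u) dG(y)`. Integrating in `x` first (Tonelli), the substitution `x ↦ u` turns the
inner integral into `s ∫ q = s J(h)`, which leaves `(J(h)/s²) ∫ y² dG`.
-/

open MeasureTheory
open scoped ENNReal

section CauchySchwarz

variable {α : Type*} [MeasurableSpace α] {μ : Measure α}

theorem ENNReal.lintegral_mul_sq_le {f g : α → ℝ≥0∞} (hf : AEMeasurable f μ)
    (hg : AEMeasurable g μ) :
    (∫⁻ a, f a * g a ∂μ) ^ 2 ≤ (∫⁻ a, f a ^ 2 ∂μ) * ∫⁻ a, g a ^ 2 ∂μ := by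
  have holder := ENNReal.lintegral_mul_le_Lp_mul_Lq μ Real.HolderConjugate.two_two hf hg
  simp only [Pi.mul_apply, ENNReal.rpow_two] at holder
  calc (∫⁻ a, f a * g a ∂μ) ^ 2
      ≤ ((∫⁻ a, f a ^ 2 ∂μ) ^ (1 / 2 : ℝ) * (∫⁻ a, g a ^ 2 ∂μ) ^ (1 / 2 : ℝ)) ^ 2 := by
        gcongr
    _ = (∫⁻ a, f a ^ 2 ∂μ) * ∫⁻ a, g a ^ 2 ∂μ := by
        rw [mul_pow, ← ENNReal.rpow_two, ← ENNReal.rpow_two, ← ENNReal.rpow_mul,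
          ← ENNReal.rpow_mul]
        norm_num

theorem ofReal_sq_integral_div_integral_le {f g : α → ℝ} (hf : AEMeasurable f μ)
    (hg : AEMeasurable g μ) (hg_pos : ∀ a, 0 < g a) :
    ENNReal.ofReal ((∫ a, f a ∂μ) ^ 2 / ∫ a, g a ∂μ)
      ≤ ∫⁻ a, ENNReal.ofReal (f a ^ 2 / g a) ∂μ := by
  rcases (integral_nonneg (μ := μ) (f := g) fun a => (hg_pos a).le).eq_or_lt with hg0 | hg0
  · simp [← hg0]
  have hg_int : Integrable g μ := by
    by_contra hc
    rw [integral_undef hc] at hg0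
    exact hg0.false
  have hsplit : ∀ a, ‖f a‖ₑ
      = ENNReal.ofReal (|f a| / √(g a)) * ENNReal.ofReal √(g a) := fun a => by
    rw [← ENNReal.ofReal_mul (by positivity), div_mul_cancel₀ _ (Real.sqrt_pos.2 (hg_pos a)).ne',
      Real.enorm_eq_ofReal_abs]
  have hsq_left : ∀ a, ENNReal.ofReal (|f a| / √(g a)) ^ 2 = ENNReal.ofReal (f a ^ 2 / g a) :=
    fun a => by
      rw [← ENNReal.ofReal_pow (by positivity), div_pow, sq_abs, Real.sq_sqrt (hg_pos a).le]
  have hsq_right : ∀ a, ENNReal.ofReal √(g a) ^ 2 = ENNReal.ofReal (g a) := fun a => by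
    rw [← ENNReal.ofReal_pow (by positivity), Real.sq_sqrt (hg_pos a).le]
  have hnum : ENNReal.ofReal ((∫ a, f a ∂μ) ^ 2)
      ≤ (∫⁻ a, ENNReal.ofReal (f a ^ 2 / g a) ∂μ) * ENNReal.ofReal (∫ a, g a ∂μ) := by
    calc ENNReal.ofReal ((∫ a, f a ∂μ) ^ 2) = ‖∫ a, f a ∂μ‖ₑ ^ 2 := by
          rw [Real.enorm_eq_ofReal_abs, ← ENNReal.ofReal_pow (abs_nonneg _), sq_abs]
      _ ≤ (∫⁻ a, ‖f a‖ₑ ∂μ) ^ 2 := by gcongr; exact enorm_integral_le_lintegral_enorm f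
      _ ≤ _ := by
        simp_rw [hsplit]
        refine (ENNReal.lintegral_mul_sq_le ?_ ?_).trans_eq ?_
        · exact (hf.abs.div hg.sqrt).ennreal_ofReal
        · exact hg.sqrt.ennreal_ofReal
        · rw [ofReal_integral_eq_lintegral_ofReal hg_int (ae_of_all _ fun a => (hg_pos a).le)]
          simp_rw [hsq_left, hsq_right]
  rw [ENNReal.ofReal_div_of_pos hg0]
  exact ENNReal.div_le_of_le_mul hnum

end CauchySchwarz

theorem lintegral_ofReal_comp_sub_div {q : ℝ → ℝ} (hq : Integrable q) (hq_nonneg : ∀ w, 0 ≤ q w)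
    (c : ℝ) {s : ℝ} (hs : 0 < s) :
    ∫⁻ x, ENNReal.ofReal (q ((x - c) / s)) = ENNReal.ofReal (s * ∫ w, q w) := by
  rw [← ofReal_integral_eq_lintegral_ofReal ((hq.comp_div hs.ne').comp_sub_right c)
      (.of_forall fun x => hq_nonneg _),
    integral_sub_right_eq_self (fun x => q (x / s)) c, Measure.integral_comp_div,
    abs_of_pos hs, smul_eq_mul]

theorem lintegral_lintegral_mul_comp_sub_div {q : ℝ → ℝ} (hqm : Measurable q)
    (hq : Integrable q) (hq_nonneg : ∀ w, 0 ≤ q w) (G : Measure ℝ) [SFinite G]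
    {v : ℝ → ℝ} (hv : Integrable v G) (hv_nonneg : ∀ y, 0 ≤ v y) (θ : ℝ) {s : ℝ} (hs : 0 < s) :
    ∫⁻ x, ∫⁻ y, ENNReal.ofReal (v y * q ((x - θ * y) / s)) ∂G
      = ENNReal.ofReal (s * (∫ w, q w) * ∫ y, v y ∂G) := by
  have hmeas : AEMeasurable
      (Function.uncurry fun x y => ENNReal.ofReal (v y * q ((x - θ * y) / s))) (volume.prod G) :=
    (hv.aemeasurable.comp_snd.mul
      (hqm.comp ((measurable_fst.sub (measurable_snd.const_mul θ)).div_const s)).aemeasurable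
      ).ennreal_ofReal
  have hinner : ∀ y, ∫⁻ x, ENNReal.ofReal (v y * q ((x - θ * y) / s))
      = ENNReal.ofReal (s * ∫ w, q w) * ENNReal.ofReal (v y) := fun y => by
    simp_rw [ENNReal.ofReal_mul (hv_nonneg y)]
    rw [lintegral_const_mul' _ _ ENNReal.ofReal_ne_top,
      lintegral_ofReal_comp_sub_div hq hq_nonneg _ hs, mul_comm]
  rw [lintegral_lintegral_swap hmeas, lintegral_congr hinner,
    lintegral_const_mul' _ _ ENNReal.ofReal_ne_top,
    ← ofReal_integral_eq_lintegral_ofReal hv (.of_forall hv_nonneg),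
    ← ENNReal.ofReal_mul (mul_nonneg hs.le (integral_nonneg hq_nonneg))]

theorem ofReal_sq_div_mixture_le {h d : ℝ → ℝ} (hh : Measurable h) (hd : Measurable d)
    (hpos : ∀ w, 0 < h w) (G : Measure ℝ) {s : ℝ} (hs : 0 < s) (θ x : ℝ) :
    ENNReal.ofReal (((1 / s ^ 2) * ∫ y, y * d ((x - θ * y) / s) ∂G) ^ 2 /
        ((1 / s) * ∫ y, h ((x - θ * y) / s) ∂G))
      ≤ ENNReal.ofReal (1 / s ^ 3) *
        ∫⁻ y, ENNReal.ofReal (y ^ 2 * (d ((x - θ * y) / s) ^ 2 / h ((x - θ * y) / s))) ∂G := by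
  have hu : Measurable fun y : ℝ => (x - θ * y) / s := by fun_prop
  have hscale : ∀ A B : ℝ, ((1 / s ^ 2) * A) ^ 2 / ((1 / s) * B) = 1 / s ^ 3 * (A ^ 2 / B) :=
    fun A B => by field_simp
  rw [hscale, ENNReal.ofReal_mul (by positivity)]
  gcongr
  refine (ofReal_sq_integral_div_integral_le (measurable_id.mul (hd.comp hu)).aemeasurable
    (hh.comp hu).aemeasurable fun y => hpos _).trans_eq (lintegral_congr fun y => ?_)
  simp only [Pi.mul_apply, Function.comp_apply, id, mul_pow, mul_div_assoc]

theorem stmt_7_general (h : ℝ → ℝ) (hdiff : Differentiable ℝ h) (hpos : ∀ w, 0 < h w)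
    (hJ : Integrable (fun w => (deriv h w) ^ 2 / h w))
    (G : Measure ℝ) [IsProbabilityMeasure G]
    (hmom : Integrable (fun y => y ^ 2) G)
    (s θ : ℝ) (hs : 0 < s) :
    ∫⁻ x : ℝ, ENNReal.ofReal
        (((1 / s ^ 2) * ∫ y, y * deriv h ((x - θ * y) / s) ∂G) ^ 2 /
          ((1 / s) * ∫ y, h ((x - θ * y) / s) ∂G))
      ≤ ENNReal.ofReal (((∫ w, (deriv h w) ^ 2 / h w) / s ^ 2) * ∫ y, y ^ 2 ∂G) := by
  have hh : Measurable h := hdiff.continuous.measurable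
  calc _ ≤ _ :=
        lintegral_mono fun x => ofReal_sq_div_mixture_le hh (measurable_deriv h) hpos G hs θ x
    _ = _ := by
      rw [lintegral_const_mul' _ _ ENNReal.ofReal_ne_top,
        lintegral_lintegral_mul_comp_sub_div (q := fun w => deriv h w ^ 2 / h w)
          (((measurable_deriv h).pow_const 2).div hh) hJ
          (fun w => div_nonneg (sq_nonneg _) (hpos w).le) G hmom sq_nonneg θ hs,
        ← ENNReal.ofReal_mul (by positivity)]
      congr 1
      field_simp

/-- Theorem 4.3: the (θ,θ) Fisher information of the convolution model is bounded by
(J(h)/s²) · ∫ y² dG(y). -/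
theorem stmt_7 (h : ℝ → ℝ) (hdiff : Differentiable ℝ h) (hpos : ∀ w, 0 < h w)
    (hdens : ∫ w, h w = 1)
    (hJ : Integrable (fun w => (deriv h w) ^ 2 / h w))
    (G : Measure ℝ) [IsProbabilityMeasure G]
    (hmom : Integrable (fun y => y ^ 2) G)
    (s θ : ℝ) (hs : 0 < s) :
    ∫⁻ x : ℝ, ENNReal.ofReal
        (((1 / s ^ 2) * ∫ y, y * deriv h ((x - θ * y) / s) ∂G) ^ 2 /
          ((1 / s) * ∫ y, h ((x - θ * y) / s) ∂G))
      ≤ ENNReal.ofReal (((∫ w, (deriv h w) ^ 2 / h w) / s ^ 2) * ∫ y, y ^ 2 ∂G) :=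
  stmt_7_general h hdiff hpos hJ G hmom s θ hs
end

section
/- Let h : ℝ → ℝ be a continuous, bounded probability density with h(w) > 0 for all w, and let h̆ : ℝ → ℝ be continuous and bounded with ∫ h̆(w)²/h(w) dw < ∞. Let (μ_n) be a sequence of probability measures on ℝ converging weakly to the Dirac mass δ₀. Then ∫ ( ∫ h̆(x − u) dμ_n(u) )² / ( ∫ h(x − u) dμ_n(u) ) dx → ∫ h̆(w)²/h(w) dw as n → ∞. -/
/-!
Pointwise, both convolutions converge (`μₙ ⇒ δ₀`), so Fatou's lemma bounds the limit inferior
of the integrals from below by `∫ k²/h`. For the upper bound, Cauchy–Schwarz gives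
`(∫ k(x-u) dμₙ)² / ∫ h(x-u) dμₙ ≤ ∫ k²/h (x-u) dμₙ(u)`, and integrating in `x` with Tonelli and
translation invariance of Lebesgue measure returns exactly `∫ k²/h`. Working with lower
integrals avoids any integrability question for the majorant at individual points `x`.
-/

open MeasureTheory Filter Topology ENNReal

section CauchySchwarz

variable {α : Type*} [MeasurableSpace α] {μ : Measure α} {f g : α → ℝ}

theorem sq_integral_div_integral_le_integral_sq_div (hf : Integrable f μ) (hg : Integrable g μ)
    (hg_pos : ∀ a, 0 < g a) (hfg : Integrable (fun a => f a ^ 2 / g a) μ) :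
    (∫ a, f a ∂μ) ^ 2 / ∫ a, g a ∂μ ≤ ∫ a, f a ^ 2 / g a ∂μ := by
  set N := ∫ a, f a ∂μ with hN
  set D := ∫ a, g a ∂μ with hD_def
  rcases le_or_gt D 0 with hD | hD
  · exact (div_nonpos_of_nonneg_of_nonpos (sq_nonneg N) hD).trans
      (integral_nonneg fun a => div_nonneg (sq_nonneg _) (hg_pos a).le)
  -- `f²/g ≥ 2tf - t²g` since the difference is `(f - tg)²/g`; optimise at `t = N/D`.
  set t := N / D with ht
  have hpointwise : ∀ a, 2 * t * f a - t ^ 2 * g a ≤ f a ^ 2 / g a := fun a => by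
    rw [le_div_iff₀ (hg_pos a)]
    nlinarith [sq_nonneg (f a - t * g a)]
  calc N ^ 2 / D = ∫ a, 2 * t * f a - t ^ 2 * g a ∂μ := by
        rw [integral_sub (hf.const_mul _) (hg.const_mul _), integral_const_mul,
          integral_const_mul, ← hN, ← hD_def, ht]
        field_simp
        ring
    _ ≤ ∫ a, f a ^ 2 / g a ∂μ :=
        integral_mono ((hf.const_mul _).sub (hg.const_mul _)) hfg hpointwise

theorem ofReal_sq_integral_div_integral_le_lintegral (hf : Integrable f μ) (hg : Integrable g μ)
    (hg_pos : ∀ a, 0 < g a) :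
    ENNReal.ofReal ((∫ a, f a ∂μ) ^ 2 / ∫ a, g a ∂μ) ≤ ∫⁻ a, ENNReal.ofReal (f a ^ 2 / g a) ∂μ := by
  have hnonneg : 0 ≤ᵐ[μ] fun a => f a ^ 2 / g a :=
    ae_of_all _ fun a => div_nonneg (sq_nonneg _) (hg_pos a).le
  by_cases hfg : Integrable (fun a => f a ^ 2 / g a) μ
  · rw [← ofReal_integral_eq_lintegral_ofReal hfg hnonneg]
    exact ENNReal.ofReal_le_ofReal (sq_integral_div_integral_le_integral_sq_div hf hg hg_pos hfg)
  · have hmeas : AEStronglyMeasurable (fun a => f a ^ 2 / g a) μ :=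
      (hf.aestronglyMeasurable.pow 2).div₀ hg.aestronglyMeasurable
    rw [Integrable, not_and, hasFiniteIntegral_iff_ofReal hnonneg, not_lt, top_le_iff] at hfg
    rw [hfg hmeas]
    exact le_top

end CauchySchwarz

theorem lintegral_lintegral_comp_sub {G : Type*} [MeasurableSpace G] [AddGroup G]
    [MeasurableAdd G] [MeasurableSub₂ G] (ν μ : Measure G) [SFinite ν] [SFinite μ]
    [ν.IsAddRightInvariant] {q : G → ℝ≥0∞} (hq : Measurable q) :
    ∫⁻ x, ∫⁻ u, q (x - u) ∂μ ∂ν = (∫⁻ w, q w ∂ν) * μ Set.univ := by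
  rw [lintegral_lintegral_swap (f := fun x u => q (x - u)) (hq.comp measurable_sub).aemeasurable]
  simp only [lintegral_sub_right_eq_self, lintegral_const]

theorem tendsto_lintegral_of_tendsto_of_lintegral_le {α : Type*} [MeasurableSpace α]
    {μ : Measure α} {f : ℕ → α → ℝ≥0∞} {g : α → ℝ≥0∞} (hf : ∀ n, AEMeasurable (f n) μ)
    (hlim : ∀ᵐ a ∂μ, Tendsto (fun n => f n a) atTop (𝓝 (g a)))
    (hle : ∀ n, ∫⁻ a, f n a ∂μ ≤ ∫⁻ a, g a ∂μ) :
    Tendsto (fun n => ∫⁻ a, f n a ∂μ) atTop (𝓝 (∫⁻ a, g a ∂μ)) := by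
  refine tendsto_of_le_liminf_of_limsup_le ?_
    (limsup_le_of_le (by isBoundedDefault) (.of_forall hle))
  calc ∫⁻ a, g a ∂μ = ∫⁻ a, liminf (fun n => f n a) atTop ∂μ :=
        lintegral_congr_ae (hlim.mono fun a ha => ha.liminf_eq.symm)
    _ ≤ liminf (fun n => ∫⁻ a, f n a ∂μ) atTop := lintegral_liminf_le' hf

theorem tendsto_integral_of_tendsto_of_lintegral_le {α : Type*} [MeasurableSpace α]
    {μ : Measure α} {f : ℕ → α → ℝ} {g : α → ℝ} (hg : Integrable g μ)
    (hf_meas : ∀ n, AEStronglyMeasurable (f n) μ) (hf_nonneg : ∀ n, 0 ≤ᵐ[μ] f n)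
    (hlim : ∀ᵐ a ∂μ, Tendsto (fun n => f n a) atTop (𝓝 (g a)))
    (hle : ∀ n, ∫⁻ a, ENNReal.ofReal (f n a) ∂μ ≤ ∫⁻ a, ENNReal.ofReal (g a) ∂μ) :
    Tendsto (fun n => ∫ a, f n a ∂μ) atTop (𝓝 (∫ a, g a ∂μ)) := by
  have hg_nonneg : 0 ≤ᵐ[μ] g := by
    filter_upwards [hlim, ae_all_iff.2 hf_nonneg] with a ha hfa
    exact ge_of_tendsto' ha hfa
  have hlim' := tendsto_lintegral_of_tendsto_of_lintegral_le
    (fun n => (hf_meas n).aemeasurable.ennreal_ofReal)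
    (hlim.mono fun a ha => (ENNReal.continuous_ofReal.tendsto _).comp ha) hle
  simp only [integral_eq_lintegral_of_nonneg_ae (hf_nonneg _) (hf_meas _),
    integral_eq_lintegral_of_nonneg_ae hg_nonneg hg.aestronglyMeasurable]
  exact (ENNReal.tendsto_toReal
    (ofReal_integral_eq_lintegral_ofReal hg hg_nonneg ▸ ENNReal.ofReal_ne_top)).comp hlim'

theorem stmt_8_general (h k : ℝ → ℝ) (hcont : Continuous h) (hbd : ∃ M, ∀ x, h x ≤ M)
    (hpos : ∀ w, 0 < h w)
    (kcont : Continuous k) (kbd : ∃ M, ∀ x, |k x| ≤ M)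
    (hfin : Integrable (fun w => k w ^ 2 / h w))
    (μ : ℕ → Measure ℝ) [∀ n, IsProbabilityMeasure (μ n)]
    (hconv : ∀ f : ℝ → ℝ, Continuous f → (∃ M, ∀ x, |f x| ≤ M) →
      Tendsto (fun n => ∫ x, f x ∂(μ n)) atTop (𝓝 (f 0))) :
    Tendsto (fun n => ∫ x, (∫ u, k (x - u) ∂(μ n)) ^ 2 / (∫ u, h (x - u) ∂(μ n)))
      atTop (𝓝 (∫ w, k w ^ 2 / h w)) := by
  obtain ⟨M, hM⟩ := hbd
  obtain ⟨K, hK⟩ := kbd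
  have hM_abs (y : ℝ) : |h y| ≤ M := (abs_of_pos (hpos y)).trans_le (hM y)
  have hint {g : ℝ → ℝ} {C : ℝ} (hg : Continuous g) (hC : ∀ y, |g y| ≤ C) (n : ℕ) (x : ℝ) :
      Integrable (fun u => g (x - u)) (μ n) :=
    Integrable.of_bound (by fun_prop) C (ae_of_all _ fun u => hC _)
  have hlim {g : ℝ → ℝ} {C : ℝ} (hg : Continuous g) (hC : ∀ y, |g y| ≤ C) (x : ℝ) :
      Tendsto (fun n => ∫ u, g (x - u) ∂(μ n)) atTop (𝓝 (g x)) := by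
    simpa using hconv (fun u => g (x - u)) (by fun_prop) ⟨C, fun u => hC _⟩
  have hmeas {g : ℝ → ℝ} (hg : Continuous g) (n : ℕ) :
      Measurable fun x => ∫ u, g (x - u) ∂(μ n) :=
    (StronglyMeasurable.integral_prod_right (f := fun x u => g (x - u))
      (hg.comp continuous_sub).stronglyMeasurable).measurable
  refine tendsto_integral_of_tendsto_of_lintegral_le hfin (fun n => ?_) (fun n => ?_)
    (ae_of_all _ fun x => ?_) (fun n => ?_)
  · exact (((hmeas kcont n).pow_const 2).div (hmeas hcont n)).aestronglyMeasurable
  · exact ae_of_all _ fun x => div_nonneg (sq_nonneg _) (integral_nonneg fun u => (hpos _).le)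
  · exact ((hlim kcont hK x).pow 2).div (hlim hcont hM_abs x) (hpos x).ne'
  · calc ∫⁻ x, ENNReal.ofReal ((∫ u, k (x - u) ∂(μ n)) ^ 2 / ∫ u, h (x - u) ∂(μ n))
        ≤ ∫⁻ x, ∫⁻ u, ENNReal.ofReal (k (x - u) ^ 2 / h (x - u)) ∂(μ n) :=
          lintegral_mono fun x => ofReal_sq_integral_div_integral_le_lintegral
            (hint kcont hK n x) (hint hcont hM_abs n x) fun u => hpos _
      _ = ∫⁻ w, ENNReal.ofReal (k w ^ 2 / h w) := by
          rw [lintegral_lintegral_comp_sub (q := fun w => ENNReal.ofReal (k w ^ 2 / h w)) _ _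
            (by fun_prop), measure_univ, mul_one]

/-- Analytic core of Theorem 4.2(a)-(b): if μₙ converges weakly to δ₀, then the Fisher-type
information of the convolved model converges to that of the base model. -/
theorem stmt_8 (h k : ℝ → ℝ) (hcont : Continuous h) (hbd : ∃ M, ∀ x, h x ≤ M)
    (hpos : ∀ w, 0 < h w) (hdens : ∫ w, h w = 1)
    (kcont : Continuous k) (kbd : ∃ M, ∀ x, |k x| ≤ M)
    (hfin : Integrable (fun w => k w ^ 2 / h w))
    (μ : ℕ → Measure ℝ) [∀ n, IsProbabilityMeasure (μ n)]
    (hconv : ∀ f : ℝ → ℝ, Continuous f → (∃ M, ∀ x, |f x| ≤ M) →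
      Tendsto (fun n => ∫ x, f x ∂(μ n)) atTop (𝓝 (f 0))) :
    Tendsto (fun n => ∫ x, (∫ u, k (x - u) ∂(μ n)) ^ 2 / (∫ u, h (x - u) ∂(μ n)))
      atTop (𝓝 (∫ w, k w ^ 2 / h w)) :=
  stmt_8_general h k hcont hbd hpos kcont kbd hfin μ hconv
end

section
/- Let h : ℝ → ℝ be a continuous probability density with h(w) > 0 for all w, and let h̆ : ℝ → ℝ be continuous with h̃ := h̆²/h Lebesgue-integrable. Let g be a measurable probability density on ℝ with g(u) > 0 for Lebesgue-almost every u, and suppose there is NO constant λ such that h̆(w) = λ·h(w) for Lebesgue-almost every w. Then ∫ ( ∫ g(u)·h̆(x − u) du )² / ( ∫ g(u)·h(x − u) du ) dx < ∫ h̆(w)²/h(w) dw, with strict inequality. -/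
/-!
Fix `x` and put `a u = k (x - u)`, `b u = h (x - u)`, `A = ∫ g a`, `B = ∫ g b` and `λ = A / B`.
Expanding the square gives the Cauchy–Schwarz identity with defect
`∫ g (a - λ b)² / b = ∫ g a² / b - A² / B`.
The left side is positive: the open set where `k ≠ λ h` is nonempty because `k` is not proportional
to `h`, and `g > 0` almost everywhere on it. Hence `A² / B < (g ⋆ k² / h) x` for almost every `x`,
and integrating in `x` gives the claim, since `∫ g ⋆ k² / h = ∫ g · ∫ k² / h = ∫ k² / h`.
-/

open MeasureTheory Filter ContinuousLinearMap Convolution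

section

variable {α : Type*} [MeasurableSpace α] {μ : Measure α}

theorem integrable_of_integrable_sq_div {a b : α → ℝ} (ha : AEStronglyMeasurable a μ)
    (hb : ∀ u, 0 < b u) (hab : Integrable (fun u => a u ^ 2 / b u) μ) (hbi : Integrable b μ) :
    Integrable a μ := by
  refine (hab.add hbi).mono' ha (Eventually.of_forall fun u => ?_)
  have hbu := hb u
  rw [Real.norm_eq_abs, Pi.add_apply, div_add' _ _ _ hbu.ne', le_div_iff₀ hbu]
  nlinarith [sq_abs (a u), sq_nonneg (|a u| - b u), abs_nonneg (a u)]

theorem sq_integral_div_integral_lt_integral {w a b : α → ℝ} (hb : ∀ u, 0 < b u)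
    (hw : 0 ≤ᵐ[μ] w) (hwa : Integrable (fun u => w u * a u) μ)
    (hwb : Integrable (fun u => w u * b u) μ)
    (hwab : Integrable (fun u => w u * (a u ^ 2 / b u)) μ)
    (hnp : ∀ lam : ℝ, 0 < μ {u | 0 < w u ∧ a u ≠ lam * b u}) :
    (∫ u, w u * a u ∂μ) ^ 2 / ∫ u, w u * b u ∂μ < ∫ u, w u * (a u ^ 2 / b u) ∂μ := by
  set A := ∫ u, w u * a u ∂μ
  set B := ∫ u, w u * b u ∂μ
  set lam := A / B with hlam
  have hB : 0 < B := by
    refine (integral_pos_iff_support_of_nonneg_ae ?_ hwb).2 ((hnp 0).trans_le (measure_mono ?_))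
    · filter_upwards [hw] with u hu using mul_nonneg hu (hb u).le
    · rintro u ⟨hwu, -⟩
      exact (mul_pos hwu (hb u)).ne'
  have hexpand : (fun u => w u * ((a u - lam * b u) ^ 2 / b u)) =
      fun u => w u * (a u ^ 2 / b u) - 2 * lam * (w u * a u) + lam ^ 2 * (w u * b u) := by
    funext u
    have := (hb u).ne'
    field_simp
    ring
  have hsub : Integrable (fun u => w u * (a u ^ 2 / b u) - 2 * lam * (w u * a u)) μ :=
    hwab.sub (hwa.const_mul _)
  have hdefect_int : Integrable (fun u => w u * ((a u - lam * b u) ^ 2 / b u)) μ := by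
    rw [hexpand]
    exact hsub.add (hwb.const_mul _)
  have hdefect : ∫ u, w u * ((a u - lam * b u) ^ 2 / b u) ∂μ =
      ∫ u, w u * (a u ^ 2 / b u) ∂μ - A ^ 2 / B := by
    rw [hexpand, integral_add hsub (hwb.const_mul _),
      integral_sub hwab (hwa.const_mul _), integral_const_mul, integral_const_mul]
    change _ - 2 * lam * A + lam ^ 2 * B = _
    rw [hlam]
    field_simp
    ring
  have hdefect_pos : 0 < ∫ u, w u * ((a u - lam * b u) ^ 2 / b u) ∂μ := by
    refine (integral_pos_iff_support_of_nonneg_ae ?_ hdefect_int).2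
      ((hnp lam).trans_le (measure_mono ?_))
    · filter_upwards [hw] with u hu using mul_nonneg hu (div_nonneg (sq_nonneg _) (hb u).le)
    · rintro u ⟨hwu, hne⟩
      exact (mul_pos hwu (div_pos (sq_pos_of_ne_zero (sub_ne_zero.2 hne)) (hb u))).ne'
  linarith

theorem integral_lt_integral_of_nonneg_of_ae_lt [NeZero μ] {f F : α → ℝ}
    (hf : AEStronglyMeasurable f μ) (hF : Integrable F μ) (hf0 : 0 ≤ᵐ[μ] f)
    (hlt : ∀ᵐ x ∂μ, f x < F x) : ∫ x, f x ∂μ < ∫ x, F x ∂μ := by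
  have hfi : Integrable f μ := hF.mono' hf <| by
    filter_upwards [hf0, hlt] with x h0 h1
    rw [Real.norm_of_nonneg h0]
    exact h1.le
  rw [← sub_pos, ← integral_sub hF hfi, integral_pos_iff_support_of_nonneg_ae
    (hlt.mono fun x hx => (sub_pos.2 hx).le) (hF.sub hfi), pos_iff_ne_zero]
  intro hnull
  obtain ⟨x, hx, hzero⟩ := (hlt.and (measure_eq_zero_iff_ae_notMem.1 hnull)).exists
  exact hzero (sub_pos.2 hx).ne'

end

theorem IsOpen.measure_setOf_and_pos {X : Type*} [TopologicalSpace X] [MeasurableSpace X]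
    {μ : Measure X} [μ.IsOpenPosMeasure] {U : Set X} (hU : IsOpen U) (hne : U.Nonempty)
    {p : X → Prop} (hp : ∀ᵐ x ∂μ, p x) : 0 < μ {x | p x ∧ x ∈ U} := by
  rw [Set.ofPred_and, Set.ofPred_mem_eq, Set.inter_comm,
    measure_inter_conull (t := {x | p x}) (ae_iff.1 hp)]
  exact hU.measure_pos μ hne

theorem stmt_9_general (h k : ℝ → ℝ) (hcont : Continuous h) (hpos : ∀ w, 0 < h w)
    (hdens : ∫ w, h w = 1) (kcont : Continuous k)
    (hfin : Integrable (fun w => k w ^ 2 / h w))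
    (g : ℝ → ℝ) (hgpos : ∀ᵐ u ∂(volume : Measure ℝ), 0 < g u)
    (hgdens : ∫ u, g u = 1)
    (hnp : ¬ ∃ lam : ℝ, k =ᵐ[volume] fun w => lam * h w) :
    ∫ x, (∫ u, g u * k (x - u)) ^ 2 / (∫ u, g u * h (x - u))
      < ∫ w, k w ^ 2 / h w := by
  have hg : Integrable g := .of_integral_ne_zero (by simp [hgdens])
  have hh : Integrable h := .of_integral_ne_zero (by simp [hdens])
  have hk : Integrable k := integrable_of_integrable_sq_div kcont.aestronglyMeasurable hpos hfin hh
  have hdiff (lam : ℝ) : ∃ v, k v ≠ lam * h v := by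
    by_contra! heq
    exact hnp ⟨lam, .of_forall heq⟩
  have hpoint : ∀ᵐ x, (g ⋆[mul ℝ ℝ] k) x ^ 2 / (g ⋆[mul ℝ ℝ] h) x <
      (g ⋆[mul ℝ ℝ] fun w => k w ^ 2 / h w) x := by
    filter_upwards [hg.ae_convolution_exists (mul ℝ ℝ) hk, hg.ae_convolution_exists (mul ℝ ℝ) hh,
      hg.ae_convolution_exists (mul ℝ ℝ) hfin] with x hkx hhx hqx
    refine sq_integral_div_integral_lt_integral (fun u => hpos _) (hgpos.mono fun u hu => hu.le)
      hkx hhx hqx fun lam => ?_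
    obtain ⟨v, hv⟩ := hdiff lam
    exact IsOpen.measure_setOf_and_pos (isOpen_ne_fun (by fun_prop) (by fun_prop))
      ⟨x - v, by simpa using hv⟩ hgpos
  have hmeas : AEStronglyMeasurable
      (fun x => (g ⋆[mul ℝ ℝ] k) x ^ 2 / (g ⋆[mul ℝ ℝ] h) x) volume :=
    (((hg.integrable_convolution (mul ℝ ℝ) hk).aemeasurable.pow_const 2).div
      (hg.integrable_convolution (mul ℝ ℝ) hh).aemeasurable).aestronglyMeasurable
  have hnonneg (x : ℝ) : 0 ≤ (g ⋆[mul ℝ ℝ] k) x ^ 2 / (g ⋆[mul ℝ ℝ] h) x :=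
    div_nonneg (sq_nonneg _) <| integral_nonneg_of_ae <|
      hgpos.mono fun u hu => (mul_pos hu (hpos _)).le
  calc _ < ∫ x, (g ⋆[mul ℝ ℝ] fun w => k w ^ 2 / h w) x :=
        integral_lt_integral_of_nonneg_of_ae_lt hmeas (hg.integrable_convolution (mul ℝ ℝ) hfin)
          (.of_forall hnonneg) hpoint
    _ = ∫ w, k w ^ 2 / h w := by
        rw [integral_convolution _ hg hfin, hgdens, mul_apply', one_mul]

/-- Key step of Theorem 4.2(c): convolving with a genuine density g strictly decreases the
Fisher-type information, provided the score k is not a.e. proportional to the density h. -/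
theorem stmt_9 (h k : ℝ → ℝ) (hcont : Continuous h) (hpos : ∀ w, 0 < h w)
    (hdens : ∫ w, h w = 1) (kcont : Continuous k)
    (hfin : Integrable (fun w => k w ^ 2 / h w))
    (g : ℝ → ℝ) (hg : Measurable g) (hgpos : ∀ᵐ u ∂(volume : Measure ℝ), 0 < g u)
    (hgdens : ∫ u, g u = 1)
    (hnp : ¬ ∃ lam : ℝ, k =ᵐ[volume] fun w => lam * h w) :
    ∫ x, (∫ u, g u * k (x - u)) ^ 2 / (∫ u, g u * h (x - u))
      < ∫ w, k w ^ 2 / h w :=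
  stmt_9_general h k hcont hpos hdens kcont hfin g hgpos hgdens hnp
end

section
/- Let 0 < α < β, let η > 0 and C > 0, and let h : ℝ → [0,∞) be a measurable probability density with h(x) ≤ C·min(1, |x|^{−(1+β)}) for all x ≠ 0. Define D_η(x) = ∫_{{y : |y| > η}} h(x − y)·|y|^{−(1+α)} dy. Then |x|^{1+α}·D_η(x) → 1 as |x| → ∞. -/
open MeasureTheory Filter Topology

/-!
After the substitution `z = x - y` the integral becomes `∫ h z * k (x - z) dz`, where `k` is the
kernel `|w| ^ (-(1 + α))` cut off at `|w| ≤ η`. On `|z| ≤ |x| / 2` the weight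
`|x| ^ (1 + α) * k (x - z)` is bounded by `2 ^ (1 + α)` and tends to `1` pointwise, so dominated
convergence gives `∫ h = 1`. On `|z| > |x| / 2` the tail bound gives
`h z ≤ C * 2 ^ (1 + β) * |x| ^ (-(1 + β))`; as `k` is integrable (`α > 0`), this piece is
`O(|x| ^ (α - β)) → 0`.
-/

noncomputable def truncatedKernel (η s : ℝ) : ℝ → ℝ :=
  {w : ℝ | η < |w|}.indicator fun w => |w| ^ (-s)

instance Real.isCountablyGenerated_cocompact : (cocompact ℝ).IsCountablyGenerated := by
  rw [cocompact_eq_atBot_atTop]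
  infer_instance

lemma Real.tendsto_abs_cocompact_atTop : Tendsto (fun x : ℝ => |x|) (cocompact ℝ) atTop :=
  tendsto_norm_cocompact_atTop

lemma Real.tendsto_inv_cocompact : Tendsto (fun x : ℝ => x⁻¹) (cocompact ℝ) (𝓝 0) :=
  Metric.cobounded_eq_cocompact (α := ℝ) ▸ tendsto_inv₀_cobounded

lemma abs_rpow_mul_abs_sub_rpow_neg_le {s x z : ℝ} (hs : 0 ≤ s) (hx : x ≠ 0)
    (hz : |z| ≤ |x| / 2) : |x| ^ s * |x - z| ^ (-s) ≤ 2 ^ s := by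
  have hxz : |x| / 2 ≤ |x - z| := by linarith [abs_sub_abs_le_abs_sub x z]
  have hxz_pos : 0 < |x - z| := by linarith [abs_pos.mpr hx]
  rw [Real.rpow_neg hxz_pos.le, ← div_eq_mul_inv, ← Real.div_rpow (abs_nonneg x) hxz_pos.le]
  refine Real.rpow_le_rpow (by positivity) ?_ hs
  rw [div_le_iff₀ hxz_pos]
  linarith

namespace truncatedKernel

variable {η s : ℝ}

lemma measurableSet_lt_abs : MeasurableSet {w : ℝ | η < |w|} :=
  measurableSet_lt measurable_const continuous_abs.measurable

lemma measurable : Measurable (truncatedKernel η s) :=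
  (continuous_abs.measurable.pow_const _).indicator measurableSet_lt_abs

lemma nonneg (w : ℝ) : 0 ≤ truncatedKernel η s w :=
  Set.indicator_nonneg (fun w _ => Real.rpow_nonneg (abs_nonneg w) _) w

lemma le_rpow (w : ℝ) : truncatedKernel η s w ≤ |w| ^ (-s) :=
  Set.indicator_le_self' (fun w _ => Real.rpow_nonneg (abs_nonneg w) _) w

lemma le_rpow_radius (hη : 0 < η) (hs : 0 ≤ s) (w : ℝ) :
    truncatedKernel η s w ≤ η ^ (-s) := by
  by_cases hw : η < |w|
  · exact (le_rpow w).trans (Real.rpow_le_rpow_of_nonpos hη hw.le (neg_nonpos.mpr hs))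
  · rw [truncatedKernel, Set.indicator_of_notMem (s := {w : ℝ | η < |w|}) hw]
    exact Real.rpow_nonneg hη.le _

lemma eq_rpow {w : ℝ} (hw : η < |w|) : truncatedKernel η s w = |w| ^ (-s) :=
  Set.indicator_of_mem (s := {w : ℝ | η < |w|}) hw _

lemma integrable (hη : 0 < η) (hs : 1 < s) : Integrable (truncatedKernel η s) := by
  have hIoi : IntegrableOn (fun w : ℝ => |w| ^ (-s)) (Set.Ioi η) :=
    (integrableOn_Ioi_rpow_of_lt (a := -s) (by linarith) hη).congr_fun
      (fun w hw => by rw [abs_of_pos (hη.trans hw)]) measurableSet_Ioi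
  have hIio : IntegrableOn (fun w : ℝ => |w| ^ (-s)) (Set.Iio (-η)) := by
    have h := IntegrableOn.comp_neg_Iio (c := -η) (f := fun w : ℝ => |w| ^ (-s))
      (by rwa [neg_neg])
    simpa only [abs_neg] using h
  have hset : {w : ℝ | η < |w|} = Set.Iio (-η) ∪ Set.Ioi η := by
    ext w
    simp only [Set.mem_ofPred_eq, Set.mem_union, Set.mem_Iio, Set.mem_Ioi, lt_abs]
    constructor <;> rintro (hw | hw) <;> first | (left; linarith) | (right; linarith)
  refine IntegrableOn.integrable_indicator ?_ measurableSet_lt_abs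
  rw [hset]
  exact hIio.union hIoi

lemma abs_rpow_mul_sub_le (hs : 0 ≤ s) {x z : ℝ} (hx : x ≠ 0) (hz : |z| ≤ |x| / 2) :
    |x| ^ s * truncatedKernel η s (x - z) ≤ 2 ^ s :=
  (mul_le_mul_of_nonneg_left (le_rpow _) (by positivity)).trans
    (abs_rpow_mul_abs_sub_rpow_neg_le hs hx hz)

lemma tendsto_abs_rpow_mul_sub (z : ℝ) :
    Tendsto (fun x => |x| ^ s * truncatedKernel η s (x - z)) (cocompact ℝ) (𝓝 1) := by
  have hlim : Tendsto (fun x : ℝ => |1 - z * x⁻¹| ^ (-s)) (cocompact ℝ) (𝓝 1) := by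
    have := (((Real.tendsto_inv_cocompact.const_mul z).const_sub 1).abs).rpow_const
      (p := -s) (Or.inl (by simp))
    simpa using this
  refine hlim.congr' ?_
  filter_upwards [Real.tendsto_abs_cocompact_atTop.eventually_gt_atTop (max η 0 + |z|)] with x hx
  have hxz : η < |x - z| := by
    linarith [abs_sub_abs_le_abs_sub x z, le_max_left η 0]
  have hx0 : 0 < |x| := by linarith [le_max_right η 0, abs_nonneg z]
  rw [eq_rpow hxz, show 1 - z * x⁻¹ = (x - z) / x by field_simp [abs_pos.mp hx0], abs_div,
    Real.div_rpow (abs_nonneg _) hx0.le, Real.rpow_neg hx0.le, div_inv_eq_mul, mul_comm]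

end truncatedKernel

section Convolution

variable {η s : ℝ} {h : ℝ → ℝ}

lemma setIntegral_lt_abs_mul_rpow_neg_eq (f : ℝ → ℝ) (x : ℝ) :
    ∫ y in {y : ℝ | η < |y|}, f (x - y) * |y| ^ (-s) =
      ∫ z, f z * truncatedKernel η s (x - z) := by
  rw [← integral_indicator truncatedKernel.measurableSet_lt_abs,
    ← integral_sub_left_eq_self (fun z => f z * truncatedKernel η s (x - z)) volume x]
  simp only [sub_sub_cancel, truncatedKernel, Set.indicator_mul_right]

lemma integrable_mul_truncatedKernel_sub (hη : 0 < η) (hs : 0 ≤ s) (hh : Integrable h)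
    (x : ℝ) : Integrable fun z => h z * truncatedKernel η s (x - z) :=
  hh.mul_bdd ((truncatedKernel.measurable.comp (measurable_const_sub x)).aestronglyMeasurable)
    (Eventually.of_forall fun z => by
      rw [Real.norm_of_nonneg (truncatedKernel.nonneg _)]
      exact truncatedKernel.le_rpow_radius hη hs _)

lemma tendsto_setIntegral_abs_le_half (hη : 0 < η) (hs : 0 ≤ s) (hh : Integrable h) :
    Tendsto
      (fun x => ∫ z in {z | |z| ≤ |x| / 2}, |x| ^ s * (h z * truncatedKernel η s (x - z)))
      (cocompact ℝ) (𝓝 (∫ z, h z)) := by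
  have hA : ∀ x : ℝ, MeasurableSet {z : ℝ | |z| ≤ |x| / 2} := fun x =>
    measurableSet_le continuous_abs.measurable measurable_const
  simp_rw [← integral_indicator (hA _)]
  refine tendsto_integral_filter_of_dominated_convergence (fun z => 2 ^ s * ‖h z‖)
    (Eventually.of_forall fun x =>
      (((integrable_mul_truncatedKernel_sub hη hs hh x).const_mul _).indicator (hA x)).1)
    ?_ (hh.norm.const_mul _) ?_
  · filter_upwards [Real.tendsto_abs_cocompact_atTop.eventually_gt_atTop 0] with x hx
    refine Eventually.of_forall fun z => ?_
    rw [Set.indicator_apply]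
    split_ifs with hz
    · rw [mul_left_comm, norm_mul, mul_comm,
        Real.norm_of_nonneg (mul_nonneg (by positivity) (truncatedKernel.nonneg _))]
      exact mul_le_mul_of_nonneg_right
        (truncatedKernel.abs_rpow_mul_sub_le hs (abs_pos.mp hx) hz) (norm_nonneg _)
    · rw [norm_zero]
      positivity
  · refine Eventually.of_forall fun z => ?_
    have hlim := (truncatedKernel.tendsto_abs_rpow_mul_sub (η := η) (s := s) z).const_mul (h z)
    rw [mul_one] at hlim
    refine hlim.congr' ?_
    filter_upwards [Real.tendsto_abs_cocompact_atTop.eventually_ge_atTop (2 * |z|)] with x hx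
    have hz : |z| ≤ |x| / 2 := by linarith
    rw [Set.indicator_of_mem (s := {z : ℝ | |z| ≤ |x| / 2}) hz, mul_left_comm]

lemma abs_rpow_mul_mul_truncatedKernel_sub_le {r C : ℝ} (hr : 0 ≤ r) (hC : 0 ≤ C)
    (htail : ∀ z, z ≠ 0 → h z ≤ C * |z| ^ (-r)) {x z : ℝ} (hx : 0 < |x|)
    (hz : |x| / 2 < |z|) : |x| ^ s * (h z * truncatedKernel η s (x - z)) ≤
      C * 2 ^ r * |x| ^ (s - r) * truncatedKernel η s (x - z) := by
  have hhz : h z ≤ C * 2 ^ r * |x| ^ (-r) :=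
    calc h z ≤ C * |z| ^ (-r) := htail z (abs_pos.mp (by linarith))
      _ ≤ C * (|x| / 2) ^ (-r) := mul_le_mul_of_nonneg_left
        (Real.rpow_le_rpow_of_nonpos (half_pos hx) hz.le (neg_nonpos.mpr hr)) hC
      _ = C * 2 ^ r * |x| ^ (-r) := by
        rw [Real.div_rpow (abs_nonneg x) zero_le_two, Real.rpow_neg zero_le_two, div_inv_eq_mul]
        ring
  calc |x| ^ s * (h z * truncatedKernel η s (x - z))
      ≤ |x| ^ s * (C * 2 ^ r * |x| ^ (-r) * truncatedKernel η s (x - z)) := by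
        gcongr
        exact truncatedKernel.nonneg _
    _ = C * 2 ^ r * |x| ^ (s - r) * truncatedKernel η s (x - z) := by
        rw [Real.rpow_sub hx, Real.rpow_neg hx.le]
        ring

lemma tendsto_setIntegral_half_lt_abs {r C : ℝ} (hη : 0 < η) (hs : 1 < s) (hsr : s < r)
    (hC : 0 ≤ C) (hnn : ∀ z, 0 ≤ h z) (htail : ∀ z, z ≠ 0 → h z ≤ C * |z| ^ (-r)) :
    Tendsto
      (fun x => ∫ z in {z | |z| ≤ |x| / 2}ᶜ, |x| ^ s * (h z * truncatedKernel η s (x - z)))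
      (cocompact ℝ) (𝓝 0) := by
  set K := ∫ w, truncatedKernel η s w
  have hA : ∀ x : ℝ, MeasurableSet {z : ℝ | |z| ≤ |x| / 2}ᶜ := fun x =>
    (measurableSet_le continuous_abs.measurable measurable_const).compl
  have hf_nonneg : ∀ x z : ℝ, 0 ≤ |x| ^ s * (h z * truncatedKernel η s (x - z)) := fun x z =>
    mul_nonneg (by positivity) (mul_nonneg (hnn z) (truncatedKernel.nonneg _))
  have hlim : Tendsto (fun x : ℝ => C * 2 ^ r * K * |x| ^ (s - r)) (cocompact ℝ) (𝓝 0) := by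
    have := ((tendsto_rpow_neg_atTop (sub_pos.mpr hsr)).comp
      Real.tendsto_abs_cocompact_atTop).const_mul (C * 2 ^ r * K)
    simpa only [mul_zero, neg_sub, Function.comp_def] using this
  refine squeeze_zero' (Eventually.of_forall fun x => setIntegral_nonneg (hA x) fun z _ =>
    hf_nonneg x z) ?_ hlim
  filter_upwards [Real.tendsto_abs_cocompact_atTop.eventually_gt_atTop 0] with x hx
  set g := fun z => C * 2 ^ r * |x| ^ (s - r) * truncatedKernel η s (x - z)
  have hg : Integrable g := ((truncatedKernel.integrable hη hs).comp_sub_left x).const_mul _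
  calc ∫ z in {z | |z| ≤ |x| / 2}ᶜ, |x| ^ s * (h z * truncatedKernel η s (x - z))
      ≤ ∫ z in {z | |z| ≤ |x| / 2}ᶜ, g z :=
        integral_mono_of_nonneg (Eventually.of_forall (hf_nonneg x)) hg.integrableOn
          (ae_restrict_of_forall_mem (hA x) fun z hz => abs_rpow_mul_mul_truncatedKernel_sub_le
            (by linarith) hC htail hx (lt_of_not_ge hz))
    _ ≤ ∫ z, g z := setIntegral_le_integral hg
        (Eventually.of_forall fun z => mul_nonneg (by positivity) (truncatedKernel.nonneg _))
    _ = C * 2 ^ r * K * |x| ^ (s - r) := by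
        simp only [g, integral_const_mul, integral_sub_left_eq_self]
        ring

theorem tendsto_abs_rpow_mul_integral_mul_truncatedKernel_sub {r C : ℝ} (hη : 0 < η)
    (hs : 1 < s) (hsr : s < r) (hC : 0 ≤ C) (hh : Integrable h) (hnn : ∀ z, 0 ≤ h z)
    (htail : ∀ z, z ≠ 0 → h z ≤ C * |z| ^ (-r)) :
    Tendsto (fun x => |x| ^ s * ∫ z, h z * truncatedKernel η s (x - z)) (cocompact ℝ)
      (𝓝 (∫ z, h z)) := by
  have hs₀ : 0 ≤ s := by linarith
  have hsplit : ∀ x : ℝ, |x| ^ s * ∫ z, h z * truncatedKernel η s (x - z) =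
      (∫ z in {z | |z| ≤ |x| / 2}, |x| ^ s * (h z * truncatedKernel η s (x - z))) +
        ∫ z in {z | |z| ≤ |x| / 2}ᶜ, |x| ^ s * (h z * truncatedKernel η s (x - z)) := by
    intro x
    rw [← integral_const_mul, integral_add_compl
      (measurableSet_le continuous_abs.measurable measurable_const)
      ((integrable_mul_truncatedKernel_sub hη hs₀ hh x).const_mul _)]
  simpa only [hsplit, add_zero] using (tendsto_setIntegral_abs_le_half hη hs₀ hh).add
    (tendsto_setIntegral_half_lt_abs hη hs hsr hC hnn htail)

end Convolution

theorem stmt_13_general (α β η C : ℝ) (hα : 0 < α) (hαβ : α < β) (hη : 0 < η) (hC : 0 < C)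
    (h : ℝ → ℝ) (hnn : ∀ x, 0 ≤ h x) (hdens : ∫ x, h x = 1)
    (hbound : ∀ x : ℝ, x ≠ 0 → h x ≤ C * min 1 (|x| ^ (-(1 + β)))) :
    Tendsto (fun x : ℝ =>
        |x| ^ (1 + α) * ∫ y in {y : ℝ | η < |y|}, h (x - y) * |y| ^ (-(1 + α)))
      (cocompact ℝ) (𝓝 1) := by
  have hh : Integrable h := Integrable.of_integral_ne_zero (by rw [hdens]; exact one_ne_zero)
  have htail : ∀ x : ℝ, x ≠ 0 → h x ≤ C * |x| ^ (-(1 + β)) := fun x hx =>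
    (hbound x hx).trans (mul_le_mul_of_nonneg_left (min_le_right _ _) hC.le)
  simp_rw [setIntegral_lt_abs_mul_rpow_neg_eq, ← hdens]
  exact tendsto_abs_rpow_mul_integral_mul_truncatedKernel_sub hη (by linarith) (by linarith)
    hC.le hh hnn htail

/-- Eq. (equivD) in the proof of Theorem 5.4: convolving a density with β-stable-like
tails against the truncated kernel |y|^{-(1+α)} gives a function equivalent to
|x|^{-(1+α)} at infinity. -/
theorem stmt_13 (α β η C : ℝ) (hα : 0 < α) (hαβ : α < β) (hη : 0 < η) (hC : 0 < C)
    (h : ℝ → ℝ) (hm : Measurable h) (hnn : ∀ x, 0 ≤ h x) (hdens : ∫ x, h x = 1)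
    (hbound : ∀ x : ℝ, x ≠ 0 → h x ≤ C * min 1 (|x| ^ (-(1 + β)))) :
    Tendsto (fun x : ℝ =>
        |x| ^ (1 + α) * ∫ y in {y : ℝ | η < |y|}, h (x - y) * |y| ^ (-(1 + α)))
      (cocompact ℝ) (𝓝 1) :=
  stmt_13_general α β η C hα hαβ hη hC h hnn hdens hbound
end

section
/- Let α, β, a, b, Γ be positive reals with 2α < β. Then lim_{u→0⁺} u^{α(β−2α)/(β−α)} · ∫_{{x : |x| > Γ}} dx / ( a·|x|^{1+2α−β} + b·u^α·|x|^{1+α} ) = ∫_ℝ dz / ( a·|z|^{1+2α−β} + b·|z|^{1+α} ), and the limit integral is finite. -/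
/-!
Put `f z = (a |z|^(1+2α-β) + b |z|^(1+α))⁻¹` and `s = u^(α/(β-α))`, so that `s^(β-α) = u^α`.
The substitution `z = s x` turns `u^(α(β-2α)/(β-α)) ∫_{|x|>Γ} …` into the tail integral
`∫_{|z|>sΓ} f`. As `u → 0⁺` the threshold `sΓ` tends to `0`, and the tails of an integrable
function converge to its full integral because the excluded interval `[-sΓ, sΓ]` has vanishing
measure. Finally `f` is integrable: it is at most `a⁻¹ |z|^(-(1+2α-β))` near `0` and at most
`b⁻¹ |z|^(-(1+α))` near infinity, and `2α < β`, `0 < α` put these exponents on the right sides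
of `-1`.
-/

open MeasureTheory Filter Topology Set Pointwise

lemma integrableOn_Ioi_inv_add_rpow {a b p q : ℝ} (ha : 0 < a) (hb : 0 < b)
    (hp : p < 1) (hq : 1 < q) :
    IntegrableOn (fun r : ℝ => (a * r ^ p + b * r ^ q)⁻¹) (Ioi 0) := by
  have hmeas : AEStronglyMeasurable (fun r : ℝ => (a * r ^ p + b * r ^ q)⁻¹) volume := by
    fun_prop
  have near_zero : IntegrableOn (fun r : ℝ => (a * r ^ p + b * r ^ q)⁻¹) (Ioc 0 1) := by
    have hdom : IntegrableOn (fun r : ℝ => a⁻¹ * r ^ (-p)) (Ioc 0 1) := by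
      have := (intervalIntegral.intervalIntegrable_rpow' (a := 0) (b := 1)
        (show -1 < -p by linarith)).const_mul a⁻¹
      rwa [intervalIntegrable_iff_integrableOn_Ioc_of_le zero_le_one] at this
    refine hdom.mono' hmeas.restrict ((ae_restrict_iff' measurableSet_Ioc).2 <| ae_of_all _ ?_)
    rintro r ⟨hr, -⟩
    rw [Real.norm_of_nonneg (by positivity), Real.rpow_neg hr.le, ← mul_inv]
    exact inv_anti₀ (by positivity) (le_add_of_nonneg_right (by positivity))
  have near_top : IntegrableOn (fun r : ℝ => (a * r ^ p + b * r ^ q)⁻¹) (Ioi 1) := by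
    have hdom : IntegrableOn (fun r : ℝ => b⁻¹ * r ^ (-q)) (Ioi 1) :=
      (integrableOn_Ioi_rpow_of_lt (by linarith) zero_lt_one).const_mul b⁻¹
    refine hdom.mono' hmeas.restrict ((ae_restrict_iff' measurableSet_Ioi).2 <| ae_of_all _ ?_)
    intro r (hr : 1 < r)
    have hr0 : 0 < r := zero_lt_one.trans hr
    rw [Real.norm_of_nonneg (by positivity), Real.rpow_neg hr0.le, ← mul_inv]
    exact inv_anti₀ (by positivity) (le_add_of_nonneg_left (by positivity))
  simpa only [Ioc_union_Ioi_eq_Ioi zero_le_one] using near_zero.union near_top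

lemma integrable_inv_add_abs_rpow {a b p q : ℝ} (ha : 0 < a) (hb : 0 < b)
    (hp : p < 1) (hq : 1 < q) :
    Integrable (fun z : ℝ => (a * |z| ^ p + b * |z| ^ q)⁻¹) := by
  have := (integrable_fun_norm_addHaar (volume : Measure ℝ)
    (f := fun r : ℝ => (a * r ^ p + b * r ^ q)⁻¹)).2
  simpa [Real.norm_eq_abs] using this (by simpa using integrableOn_Ioi_inv_add_rpow ha hb hp hq)

lemma tendsto_setIntegral_lt_abs {E : Type*} [NormedAddCommGroup E] [NormedSpace ℝ E]
    {f : ℝ → E} (hf : Integrable f) :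
    Tendsto (fun t => ∫ x in {x : ℝ | t < |x|}, f x) (𝓝 0) (𝓝 (∫ x, f x)) := by
  have hcompl : ∀ t : ℝ, {x : ℝ | t < |x|} = (Icc (-t) t)ᶜ := fun t => by
    ext x; rw [mem_compl_iff, mem_Icc, ← abs_le, not_le]; rfl
  have hvol : Tendsto (volume ∘ fun t : ℝ => Icc (-t) t) (𝓝 0) (𝓝 0) := by
    have : Tendsto (fun t : ℝ => ENNReal.ofReal (t - -t)) (𝓝 0) (𝓝 (ENNReal.ofReal (0 - -0))) :=
      (ENNReal.continuous_ofReal.tendsto _).comp ((continuous_id.sub continuous_neg).tendsto 0)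
    simpa [Function.comp_def] using this
  simp_rw [hcompl, setIntegral_compl measurableSet_Icc hf]
  simpa using tendsto_const_nhds.sub (hf.tendsto_setIntegral_nhds_zero hvol)

lemma setIntegral_lt_abs_comp_mul {E : Type*} [NormedAddCommGroup E] [NormedSpace ℝ E]
    (f : ℝ → E) (Γ : ℝ) {s : ℝ} (hs : 0 < s) :
    ∫ x in {x : ℝ | s * Γ < |x|}, f x = s • ∫ x in {x : ℝ | Γ < |x|}, f (s * x) := by
  have hset : s • {x : ℝ | Γ < |x|} = {x : ℝ | s * Γ < |x|} := by
    ext y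
    rw [mem_smul_set_iff_inv_smul_mem₀ hs.ne', mem_ofPred, mem_ofPred, smul_eq_mul, abs_mul,
      abs_inv, abs_of_pos hs, lt_inv_mul_iff₀ hs]
  have hscale := Measure.setIntegral_comp_smul_of_pos volume f {x : ℝ | Γ < |x|} hs
  simp only [smul_eq_mul, Module.finrank_self, pow_one] at hscale
  rw [hscale, smul_inv_smul₀ hs.ne', ← hset]

lemma setIntegral_lt_abs_inv_add_rpow_mul {a b p q Γ s : ℝ} (hs : 0 < s) :
    ∫ z in {z : ℝ | s * Γ < |z|}, (a * |z| ^ p + b * |z| ^ q)⁻¹ =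
      s ^ (1 - p) * ∫ x in {x : ℝ | Γ < |x|}, (a * |x| ^ p + b * s ^ (q - p) * |x| ^ q)⁻¹ := by
  have hpoint : ∀ x : ℝ, (a * |s * x| ^ p + b * |s * x| ^ q)⁻¹ =
      (s ^ p)⁻¹ * (a * |x| ^ p + b * s ^ (q - p) * |x| ^ q)⁻¹ := fun x => by
    rw [abs_mul, abs_of_pos hs, Real.mul_rpow hs.le (abs_nonneg x),
      Real.mul_rpow hs.le (abs_nonneg x), ← mul_inv, Real.rpow_sub hs]
    field_simp
  rw [setIntegral_lt_abs_comp_mul _ Γ hs, smul_eq_mul]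
  simp_rw [hpoint]
  rw [integral_const_mul, ← mul_assoc, Real.rpow_sub hs 1 p, Real.rpow_one, div_eq_mul_inv]

theorem stmt_14_general (α β a b Γ : ℝ) (hα : 0 < α) (hβ : 2 * α < β)
    (ha : 0 < a) (hb : 0 < b) :
    Integrable (fun z : ℝ => (a * |z| ^ (1 + 2 * α - β) + b * |z| ^ (1 + α))⁻¹) ∧
    Tendsto (fun u : ℝ => u ^ (α * (β - 2 * α) / (β - α)) *
        ∫ x in {x : ℝ | Γ < |x|},
          (a * |x| ^ (1 + 2 * α - β) + b * u ^ α * |x| ^ (1 + α))⁻¹)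
      (𝓝[>] 0)
      (𝓝 (∫ z : ℝ, (a * |z| ^ (1 + 2 * α - β) + b * |z| ^ (1 + α))⁻¹)) := by
  have hint := integrable_inv_add_abs_rpow ha hb (p := 1 + 2 * α - β) (q := 1 + α)
    (by linarith) (by linarith)
  refine ⟨hint, ?_⟩
  have hβα : β - α ≠ 0 := by linarith
  have hscale : ∀ u : ℝ, 0 < u →
      u ^ (α * (β - 2 * α) / (β - α)) * ∫ x in {x : ℝ | Γ < |x|},
          (a * |x| ^ (1 + 2 * α - β) + b * u ^ α * |x| ^ (1 + α))⁻¹ =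
        ∫ z in {z : ℝ | u ^ (α / (β - α)) * Γ < |z|},
          (a * |z| ^ (1 + 2 * α - β) + b * |z| ^ (1 + α))⁻¹ := fun u hu => by
    rw [setIntegral_lt_abs_inv_add_rpow_mul (Real.rpow_pos_of_pos hu _),
      ← Real.rpow_mul hu.le, ← Real.rpow_mul hu.le]
    have hE : α / (β - α) * (1 - (1 + 2 * α - β)) = α * (β - 2 * α) / (β - α) := by
      field_simp; ring
    have hα' : α / (β - α) * (1 + α - (1 + 2 * α - β)) = α := by
      field_simp; ring
    rw [hE, hα']
  have hthreshold : Tendsto (fun u : ℝ => u ^ (α / (β - α)) * Γ) (𝓝[>] 0) (𝓝 0) := by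
    have hc : 0 < α / (β - α) := div_pos hα (by linarith)
    have hcont : Tendsto (fun u : ℝ => u ^ (α / (β - α)) * Γ) (𝓝 0) (𝓝 (0 ^ (α / (β - α)) * Γ)) :=
      ((Real.continuousAt_rpow_const 0 _ (Or.inr hc.le)).mul continuousAt_const).tendsto
    rw [Real.zero_rpow hc.ne', zero_mul] at hcont
    exact hcont.mono_left nhdsWithin_le_nhds
  refine ((tendsto_setIntegral_lt_abs hint).comp hthreshold).congr' ?_
  filter_upwards [self_mem_nhdsWithin] with u hu
  exact (hscale u hu).symm

/-- Scaling limit establishing the case β < 2, α < β/2 of Theorem 5.4 (eq. SS4). -/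
theorem stmt_14 (α β a b Γ : ℝ) (hα : 0 < α) (hβ : 2 * α < β)
    (ha : 0 < a) (hb : 0 < b) (hΓ : 0 < Γ) :
    Integrable (fun z : ℝ => (a * |z| ^ (1 + 2 * α - β) + b * |z| ^ (1 + α))⁻¹) ∧
    Tendsto (fun u : ℝ => u ^ (α * (β - 2 * α) / (β - α)) *
        ∫ x in {x : ℝ | Γ < |x|},
          (a * |x| ^ (1 + 2 * α - β) + b * u ^ α * |x| ^ (1 + α))⁻¹)
      (𝓝[>] 0)
      (𝓝 (∫ z : ℝ, (a * |z| ^ (1 + 2 * α - β) + b * |z| ^ (1 + α))⁻¹)) :=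
  stmt_14_general α β a b Γ hα hβ ha hb
end

section
/- Let b > 0, α > 0 and Γ > 0. Then lim_{u→0⁺} u^α · (log(1/u))^{α/2} · ∫_Γ^∞ dx / ( x^{1+α} · ( x^{1+α}·e^{−x²/2}/√(2π) + b·u^α ) ) = 1 / ( α·b·(2α)^{α/2} ). -/
/-!
Write `u = e^{-L}`, so that `b u^α = b e^{-αL}`. The two terms of the denominator cross near
`x = √(2αL)`. For `s > α`, beyond `√(2sL)` the Gaussian term is `o(b e^{-αL})`, so the integral
over `(√(2sL), ∞)` is at least `((1 + t) b e^{-αL})⁻¹ (2sL)^{-α/2} / α`; after rescaling this is the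
lower bound `1 / (α (1 + t) b (2s)^{α/2})`. For `s < α`, the integrand on `(Γ, √(2sL)]` is at most
`C e^{x²/2} ≤ C e^{sL}`, which after rescaling contributes `O(L^{(α+1)/2} e^{-(α-s)L}) → 0`, while
the tail beyond `√(2sL)` contributes at most `1 / (α b (2s)^{α/2})`. Letting `s → α` and `t → 0`
squeezes the limit.
-/

open MeasureTheory Filter Topology Real Set

lemma rpow_le_exp_mul {a x : ℝ} (ha : 0 ≤ a) (hx : 0 ≤ x) : x ^ a ≤ exp (a * x) := by
  rcases hx.eq_or_lt with rfl | hx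
  · simpa using Real.zero_rpow_le_one a
  · rw [rpow_def_of_pos hx, mul_comm]
    gcongr
    linarith [log_le_sub_one_of_pos hx]

lemma rpow_mul_exp_neg_mul_sq_le {a η x : ℝ} (ha : 0 ≤ a) (hη : 0 < η) (hx : 0 ≤ x) :
    x ^ a * exp (-(η * x ^ 2) / 2) ≤ exp (a ^ 2 / (2 * η)) := by
  calc x ^ a * exp (-(η * x ^ 2) / 2) ≤ exp (a * x) * exp (-(η * x ^ 2) / 2) := by
        gcongr; exact rpow_le_exp_mul ha hx
    _ = exp (a * x - η * x ^ 2 / 2) := by rw [← exp_add]; ring_nf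
    _ ≤ exp (a ^ 2 / (2 * η)) := by
        gcongr
        rw [le_div_iff₀ (by positivity)]
        nlinarith [sq_nonneg (η * x - a)]

lemma one_le_sqrt_two_mul_pi : 1 ≤ sqrt (2 * π) :=
  one_le_sqrt.2 (by linarith [pi_gt_three])

lemma tendsto_log_one_div_nhdsGT_zero : Tendsto (fun u : ℝ => log (1 / u)) (𝓝[>] 0) atTop := by
  simp only [one_div, log_inv]
  exact tendsto_neg_atBot_atTop.comp tendsto_log_nhdsGT_zero

lemma tendsto_of_eventually_bounds {ι β γ : Type*} [TopologicalSpace γ] [LinearOrder γ]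
    [OrderTopology γ] {F : β → γ} {l : Filter β} {p : Filter ι} [p.NeBot] {lo hi : ι → γ}
    {ℓ : γ} (hlo : Tendsto lo p (𝓝 ℓ)) (hhi : Tendsto hi p (𝓝 ℓ))
    (hFlo : ∀ᶠ t in p, ∀ᶠ x in l, lo t ≤ F x)
    (hFhi : ∀ᶠ t in p, ∀ c, hi t < c → ∀ᶠ x in l, F x < c) :
    Tendsto F l (𝓝 ℓ) := by
  refine tendsto_order.2 ⟨fun c hc => ?_, fun c hc => ?_⟩
  · obtain ⟨t, hct, ht⟩ := ((hlo.eventually (eventually_gt_nhds hc)).and hFlo).exists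
    exact ht.mono fun x hx => hct.trans_le hx
  · obtain ⟨t, hct, ht⟩ := ((hhi.eventually (eventually_lt_nhds hc)).and hFhi).exists
    exact ht c hct

noncomputable def gaussTerm (α x : ℝ) : ℝ := x ^ (1 + α) * exp (-x ^ 2 / 2) / sqrt (2 * π)

noncomputable def crossoverIntegrand (α d x : ℝ) : ℝ := (x ^ (1 + α) * (gaussTerm α x + d))⁻¹

noncomputable def crossoverConst (α B s : ℝ) : ℝ := 1 / (α * B * (2 * s) ^ (α / 2))

/-- With `u = e^{-L}`, this is `u ^ α (log (1/u)) ^ (α/2) ∫_Γ^∞ crossoverIntegrand α (b u ^ α)`. -/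
noncomputable def rescaledIntegral (α b Γ L : ℝ) : ℝ :=
  exp (-(α * L)) * L ^ (α / 2) * ∫ x in Ioi Γ, crossoverIntegrand α (b * exp (-(α * L))) x

lemma continuousAt_crossoverConst {α B s : ℝ} (hα : 0 < α) (hB : 0 < B) (hs : 0 < s) :
    ContinuousAt (fun p : ℝ × ℝ => crossoverConst α p.1 p.2) (B, s) := by
  unfold crossoverConst
  refine continuousAt_const.div (continuousAt_const.mul continuousAt_fst |>.mul
    ((continuousAt_const.mul continuousAt_snd).rpow_const (Or.inr (by positivity)))) ?_
  positivity

section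
variable {α : ℝ}

lemma gaussTerm_nonneg {x : ℝ} (hx : 0 ≤ x) : 0 ≤ gaussTerm α x := by
  unfold gaussTerm; positivity

lemma continuousOn_gaussTerm : ContinuousOn (gaussTerm α) (Ioi 0) := by
  unfold gaussTerm
  refine ContinuousOn.div_const (ContinuousOn.mul ?_ (by fun_prop)) _
  exact fun x hx => (continuousAt_rpow_const x _ (Or.inl (ne_of_gt hx))).continuousWithinAt

/-- Splitting `e^{-x²/2} = e^{-ηx²/2} e^{-(1-η)x²/2}`, the first factor absorbs the power. -/
lemma gaussTerm_le_of_sq_le {η s L x : ℝ} (hα : 0 ≤ 1 + α) (hη : 0 < η) (hη1 : η ≤ 1)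
    (hx : 0 ≤ x) (hsL : 2 * s * L ≤ x ^ 2) :
    gaussTerm α x ≤ exp ((1 + α) ^ 2 / (2 * η)) * exp (-((1 - η) * s * L)) := by
  calc gaussTerm α x ≤ x ^ (1 + α) * exp (-x ^ 2 / 2) :=
        div_le_self (by positivity) one_le_sqrt_two_mul_pi
    _ = x ^ (1 + α) * exp (-(η * x ^ 2) / 2) * exp (-((1 - η) * x ^ 2) / 2) := by
        rw [mul_assoc, ← exp_add]; ring_nf
    _ ≤ exp ((1 + α) ^ 2 / (2 * η)) * exp (-((1 - η) * s * L)) := by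
        gcongr
        · exact rpow_mul_exp_neg_mul_sq_le hα hη hx
        · nlinarith

lemma crossoverIntegrand_nonneg {d x : ℝ} (hd : 0 ≤ d) (hx : 0 ≤ x) :
    0 ≤ crossoverIntegrand α d x := by
  unfold crossoverIntegrand; have := gaussTerm_nonneg (α := α) hx; positivity

lemma crossoverIntegrand_le {d x : ℝ} (hd : 0 < d) (hx : 0 < x) :
    crossoverIntegrand α d x ≤ d⁻¹ * x ^ (-(1 + α)) := by
  have := gaussTerm_nonneg (α := α) hx.le
  rw [crossoverIntegrand, rpow_neg hx.le, ← mul_inv, mul_comm d]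
  gcongr
  linarith

lemma le_crossoverIntegrand {d t x : ℝ} (hd : 0 < d) (hx : 0 < x)
    (hg : gaussTerm α x ≤ t * d) :
    ((1 + t) * d)⁻¹ * x ^ (-(1 + α)) ≤ crossoverIntegrand α d x := by
  have := gaussTerm_nonneg (α := α) hx.le
  rw [crossoverIntegrand, rpow_neg hx.le, ← mul_inv, mul_comm ((1 + t) * d)]
  gcongr
  linarith

lemma crossoverIntegrand_le_exp {Γ d x : ℝ} (hα : 0 ≤ 1 + α) (hΓ : 0 < Γ) (hd : 0 ≤ d)
    (hx : Γ ≤ x) :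
    crossoverIntegrand α d x ≤ sqrt (2 * π) / (Γ ^ (1 + α)) ^ 2 * exp (x ^ 2 / 2) := by
  have hΓx : Γ ^ (1 + α) ≤ x ^ (1 + α) := rpow_le_rpow hΓ.le hx hα
  have hg : x ^ (1 + α) * gaussTerm α x = (x ^ (1 + α)) ^ 2 / sqrt (2 * π) / exp (x ^ 2 / 2) := by
    rw [gaussTerm, neg_div, exp_neg]; ring
  have hpos : 0 < x ^ (1 + α) * gaussTerm α x := by
    rw [hg]; have := hΓ.trans_le hx; positivity
  calc crossoverIntegrand α d x ≤ (x ^ (1 + α) * gaussTerm α x)⁻¹ := by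
        refine inv_anti₀ hpos ?_
        have : 0 ≤ x ^ (1 + α) * d := by have := hΓ.trans_le hx; positivity
        linarith [mul_add (x ^ (1 + α)) (gaussTerm α x) d]
    _ = sqrt (2 * π) / (x ^ (1 + α)) ^ 2 * exp (x ^ 2 / 2) := by
        rw [hg]; field_simp
    _ ≤ sqrt (2 * π) / (Γ ^ (1 + α)) ^ 2 * exp (x ^ 2 / 2) := by gcongr

lemma integral_Ioi_mul_rpow_neg_one_sub {c H : ℝ} (hα : 0 < α) (hH : 0 < H) :
    ∫ x in Ioi H, c * x ^ (-(1 + α)) = c * (H ^ (-α) / α) := by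
  rw [integral_const_mul, integral_Ioi_rpow_of_lt (by linarith) hH,
    show -(1 + α) + 1 = -α by ring, neg_div_neg_eq]

lemma integrableOn_crossoverIntegrand {Γ d : ℝ} (hα : 0 < α) (hΓ : 0 < Γ) (hd : 0 < d) :
    IntegrableOn (crossoverIntegrand α d) (Ioi Γ) := by
  have hcont : ContinuousOn (crossoverIntegrand α d) (Ioi Γ) := by
    have hpow : ContinuousOn (fun x : ℝ => x ^ (1 + α)) (Ioi Γ) := fun x hx =>
      (continuousAt_rpow_const x _ (Or.inl (hΓ.trans hx).ne')).continuousWithinAt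
    refine (hpow.mul ((continuousOn_gaussTerm.mono (Ioi_subset_Ioi hΓ.le)).add
      continuousOn_const)).inv₀ fun x hx => ?_
    have hx : 0 < x := hΓ.trans hx
    exact (mul_pos (rpow_pos_of_pos hx _) (by
      simp only [Pi.add_apply]; linarith [gaussTerm_nonneg (α := α) hx.le])).ne'
  refine Integrable.mono'
    ((integrableOn_Ioi_rpow_of_lt (a := -(1 + α)) (by linarith) hΓ).const_mul d⁻¹)
    (hcont.aestronglyMeasurable measurableSet_Ioi) ?_
  filter_upwards [ae_restrict_mem measurableSet_Ioi] with x hx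
  have hx : 0 < x := hΓ.trans hx
  rw [norm_of_nonneg (crossoverIntegrand_nonneg hd.le hx.le)]
  exact crossoverIntegrand_le hd hx

lemma setIntegral_Ioi_crossoverIntegrand_le {d H : ℝ} (hα : 0 < α) (hd : 0 < d) (hH : 0 < H) :
    ∫ x in Ioi H, crossoverIntegrand α d x ≤ d⁻¹ * (H ^ (-α) / α) := by
  rw [← integral_Ioi_mul_rpow_neg_one_sub hα hH]
  exact setIntegral_mono_on (integrableOn_crossoverIntegrand hα hH hd)
    ((integrableOn_Ioi_rpow_of_lt (by linarith) hH).const_mul _) measurableSet_Ioi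
    fun x hx => crossoverIntegrand_le hd (hH.trans hx)

lemma le_setIntegral_Ioi_crossoverIntegrand {d t H : ℝ} (hα : 0 < α) (hd : 0 < d) (hH : 0 < H)
    (hg : ∀ x ∈ Ioi H, gaussTerm α x ≤ t * d) :
    ((1 + t) * d)⁻¹ * (H ^ (-α) / α) ≤ ∫ x in Ioi H, crossoverIntegrand α d x := by
  rw [← integral_Ioi_mul_rpow_neg_one_sub hα hH]
  exact setIntegral_mono_on ((integrableOn_Ioi_rpow_of_lt (by linarith) hH).const_mul _)
    (integrableOn_crossoverIntegrand hα hH hd) measurableSet_Ioi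
    fun x hx => le_crossoverIntegrand hd (hH.trans hx) (hg x hx)

lemma setIntegral_Ioc_crossoverIntegrand_le {d Γ H : ℝ} (hα : 0 ≤ 1 + α) (hd : 0 ≤ d)
    (hΓ : 0 < Γ) (hΓH : Γ ≤ H) :
    ∫ x in Ioc Γ H, crossoverIntegrand α d x ≤
      sqrt (2 * π) / (Γ ^ (1 + α)) ^ 2 * exp (H ^ 2 / 2) * (H - Γ) := by
  have hbound : ∀ x ∈ Ioc Γ H,
      ‖crossoverIntegrand α d x‖ ≤ sqrt (2 * π) / (Γ ^ (1 + α)) ^ 2 * exp (H ^ 2 / 2) := by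
    rintro x ⟨hΓx, hxH⟩
    rw [norm_of_nonneg (crossoverIntegrand_nonneg hd (hΓ.trans hΓx).le)]
    refine (crossoverIntegrand_le_exp hα hΓ hd hΓx.le).trans ?_
    gcongr
    linarith
  have := norm_setIntegral_le_of_norm_le_const (μ := volume) measure_Ioc_lt_top hbound
  rw [Real.volume_real_Ioc_of_le hΓH] at this
  exact (le_abs_self _).trans this

lemma sqrt_rpow_neg_eq {s L : ℝ} (hs : 0 ≤ s) (hL : 0 ≤ L) :
    sqrt (2 * s * L) ^ (-α) = ((2 * s) ^ (α / 2))⁻¹ * (L ^ (α / 2))⁻¹ := by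
  rw [sqrt_eq_rpow, ← rpow_mul (by positivity), show 1 / 2 * -α = -(α / 2) by ring,
    rpow_neg (by positivity), mul_rpow (by positivity) hL, mul_inv]

lemma rescaled_tail_eq_crossoverConst {B s L : ℝ} (hs : 0 < s) (hL : 0 < L) :
    exp (-(α * L)) * L ^ (α / 2) * ((B * exp (-(α * L)))⁻¹ * (sqrt (2 * s * L) ^ (-α) / α)) =
      crossoverConst α B s := by
  have : L ^ (α / 2) ≠ 0 := (rpow_pos_of_pos hL _).ne'
  have : (2 * s) ^ (α / 2) ≠ 0 := (rpow_pos_of_pos (by positivity) _).ne'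
  rw [sqrt_rpow_neg_eq hs.le hL.le, crossoverConst]
  field_simp

lemma eventually_le_sqrt_mul (Γ : ℝ) {s : ℝ} (hs : 0 < s) :
    ∀ᶠ L in atTop, Γ ≤ sqrt (2 * s * L) := by
  filter_upwards [eventually_ge_atTop (Γ ^ 2 / (2 * s))] with L hL
  exact le_sqrt_of_sq_le (by rwa [div_le_iff₀' (by positivity)] at hL)

lemma eventually_gaussTerm_le {b s t : ℝ} (hα : 0 ≤ α) (hs : α < s) (hb : 0 < b) (ht : 0 < t) :
    ∀ᶠ L in atTop, ∀ x, sqrt (2 * s * L) ≤ x → gaussTerm α x ≤ t * (b * exp (-(α * L))) := by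
  have hs0 : 0 < s := hα.trans_lt hs
  set η := (s - α) / (2 * s)
  set M := exp ((1 + α) ^ 2 / (2 * η)) with hM
  have hη : 0 < η := div_pos (by linarith) (by positivity)
  have hη1 : η ≤ 1 := by rw [div_le_one (by positivity)]; linarith
  have hηs : (1 - η) * s = (s + α) / 2 := by simp only [η]; field_simp; ring
  clear_value M η
  have hdecay : Tendsto (fun L => M * exp (-((s - α) / 2 * L))) atTop (𝓝 0) := by
    simpa using (tendsto_exp_neg_atTop_nhds_zero.comp
      (tendsto_id.const_mul_atTop (show 0 < (s - α) / 2 by linarith))).const_mul M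
  filter_upwards [hdecay.eventually (eventually_le_nhds (mul_pos ht hb))] with L hL x hx
  obtain ⟨hx0, hsL⟩ := sqrt_le_iff.1 hx
  calc gaussTerm α x ≤ M * exp (-((1 - η) * s * L)) := by
        rw [hM]; exact gaussTerm_le_of_sq_le (by linarith) hη hη1 hx0 hsL
    _ = M * exp (-((s - α) / 2 * L)) * exp (-(α * L)) := by
        rw [mul_assoc M, ← exp_add]
        congr 2
        linear_combination (-L) * hηs
    _ ≤ t * (b * exp (-(α * L))) := by rw [← mul_assoc]; gcongr

lemma eventually_crossoverConst_le_rescaledIntegral {b Γ s t : ℝ} (hα : 0 < α) (hb : 0 < b)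
    (hΓ : 0 < Γ) (hs : α < s) (ht : 0 < t) :
    ∀ᶠ L in atTop, crossoverConst α ((1 + t) * b) s ≤ rescaledIntegral α b Γ L := by
  have hs0 : 0 < s := hα.trans hs
  filter_upwards [eventually_gt_atTop 0, eventually_le_sqrt_mul Γ hs0,
    eventually_gaussTerm_le hα.le hs hb ht] with L hL hΓH hgauss
  set H := sqrt (2 * s * L)
  set d := b * exp (-(α * L))
  have hH : 0 < H := hΓ.trans_le hΓH
  have hd : 0 < d := by positivity
  have hscale : 0 ≤ exp (-(α * L)) * L ^ (α / 2) := by positivity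
  calc crossoverConst α ((1 + t) * b) s
      = exp (-(α * L)) * L ^ (α / 2) * (((1 + t) * d)⁻¹ * (H ^ (-α) / α)) := by
        rw [← rescaled_tail_eq_crossoverConst hs0 hL, mul_assoc (1 + t)]
    _ ≤ exp (-(α * L)) * L ^ (α / 2) * ∫ x in Ioi H, crossoverIntegrand α d x := by
        gcongr
        exact le_setIntegral_Ioi_crossoverIntegrand hα hd hH fun x hx => hgauss x hx.le
    _ ≤ rescaledIntegral α b Γ L := by
        refine mul_le_mul_of_nonneg_left ?_ hscale
        exact setIntegral_mono_set (integrableOn_crossoverIntegrand hα hΓ hd)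
          (ae_restrict_of_forall_mem measurableSet_Ioi fun x hx =>
            crossoverIntegrand_nonneg hd.le (hΓ.trans hx).le)
          (Ioi_subset_Ioi hΓH).eventuallyLE

lemma rescaledIntegral_le {b Γ s L : ℝ} (hα : 0 < α) (hb : 0 < b) (hΓ : 0 < Γ) (hs : 0 < s)
    (hL : 0 < L) (hΓH : Γ ≤ sqrt (2 * s * L)) :
    rescaledIntegral α b Γ L ≤ crossoverConst α b s + sqrt (2 * π) / (Γ ^ (1 + α)) ^ 2 *
      sqrt (2 * s) * (L ^ ((α + 1) / 2) * exp (-(α - s) * L)) := by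
  set H := sqrt (2 * s * L)
  set d := b * exp (-(α * L))
  set K := sqrt (2 * π) / (Γ ^ (1 + α)) ^ 2
  have hd : 0 < d := by positivity
  have hint := integrableOn_crossoverIntegrand hα hΓ hd
  have hsplit : ∫ x in Ioi Γ, crossoverIntegrand α d x =
      (∫ x in Ioc Γ H, crossoverIntegrand α d x) + ∫ x in Ioi H, crossoverIntegrand α d x := by
    rw [← Ioc_union_Ioi_eq_Ioi hΓH, setIntegral_union Ioc_disjoint_Ioi_same measurableSet_Ioi
      (hint.mono_set Ioc_subset_Ioi_self) (hint.mono_set (Ioi_subset_Ioi hΓH))]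
  have hbulk : exp (-(α * L)) * L ^ (α / 2) * (K * exp (H ^ 2 / 2) * (H - Γ)) ≤
      K * sqrt (2 * s) * (L ^ ((α + 1) / 2) * exp (-(α - s) * L)) := by
    have hH : H = sqrt (2 * s) * L ^ (1 / 2 : ℝ) := by
      rw [← sqrt_eq_rpow, ← sqrt_mul (by positivity)]
    have hH2 : H ^ 2 / 2 = s * L := by rw [sq_sqrt (by positivity)]; ring
    have hLpow : L ^ (α / 2) * L ^ (1 / 2 : ℝ) = L ^ ((α + 1) / 2) := by
      rw [← rpow_add hL]; ring_nf
    have hexp : exp (-(α * L)) * exp (s * L) = exp (-(α - s) * L) := by rw [← exp_add]; ring_nf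
    calc exp (-(α * L)) * L ^ (α / 2) * (K * exp (H ^ 2 / 2) * (H - Γ))
        ≤ exp (-(α * L)) * L ^ (α / 2) * (K * exp (H ^ 2 / 2) * H) := by
          gcongr; linarith
      _ = K * sqrt (2 * s) * (L ^ ((α + 1) / 2) * exp (-(α - s) * L)) := by
          rw [hH2, ← hLpow, ← hexp, hH]; ring
  calc rescaledIntegral α b Γ L
      = exp (-(α * L)) * L ^ (α / 2) * ((∫ x in Ioc Γ H, crossoverIntegrand α d x) +
          ∫ x in Ioi H, crossoverIntegrand α d x) := by
        rw [rescaledIntegral, hsplit]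
    _ ≤ exp (-(α * L)) * L ^ (α / 2) *
          (K * exp (H ^ 2 / 2) * (H - Γ) + d⁻¹ * (H ^ (-α) / α)) := by
        gcongr
        · exact setIntegral_Ioc_crossoverIntegrand_le (by linarith) hd.le hΓ hΓH
        · exact setIntegral_Ioi_crossoverIntegrand_le hα hd (hΓ.trans_le hΓH)
    _ ≤ _ := by
        rw [mul_add, rescaled_tail_eq_crossoverConst hs hL]
        linarith

lemma eventually_rescaledIntegral_lt {b Γ s c : ℝ} (hα : 0 < α) (hb : 0 < b) (hΓ : 0 < Γ)
    (hs : 0 < s) (hsα : s < α) (hc : crossoverConst α b s < c) :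
    ∀ᶠ L in atTop, rescaledIntegral α b Γ L < c := by
  have hbulk : Tendsto (fun L => sqrt (2 * π) / (Γ ^ (1 + α)) ^ 2 * sqrt (2 * s) *
      (L ^ ((α + 1) / 2) * exp (-(α - s) * L))) atTop (𝓝 0) := by
    simpa using (tendsto_rpow_mul_exp_neg_mul_atTop_nhds_zero ((α + 1) / 2) (α - s)
      (by linarith)).const_mul (sqrt (2 * π) / (Γ ^ (1 + α)) ^ 2 * sqrt (2 * s))
  filter_upwards [eventually_gt_atTop 0, eventually_le_sqrt_mul Γ hs,
    hbulk.eventually (eventually_lt_nhds (sub_pos.2 hc))] with L hL hΓH hsmall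
  linarith [rescaledIntegral_le hα hb hΓ hs hL hΓH]

end

lemma tendsto_rescaledIntegral {α b Γ : ℝ} (hα : 0 < α) (hb : 0 < b) (hΓ : 0 < Γ) :
    Tendsto (rescaledIntegral α b Γ) atTop (𝓝 (crossoverConst α b α)) := by
  have hlim : ∀ {B s : ℝ → ℝ}, Continuous B → Continuous s → B 0 = b → s 0 = α →
      Tendsto (fun t => crossoverConst α (B t) (s t)) (𝓝[>] 0) (𝓝 (crossoverConst α b α)) := by
    intro B s hB hs hB0 hs0
    exact ((continuousAt_crossoverConst hα hb hα).tendsto.comp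
      ((hB.prodMk hs).tendsto' 0 (b, α) (by rw [hB0, hs0]))).mono_left nhdsWithin_le_nhds
  refine tendsto_of_eventually_bounds (p := 𝓝[>] 0)
    (lo := fun t => crossoverConst α ((1 + t) * b) (α + t))
    (hi := fun t => crossoverConst α b (α - t))
    (hlim (by fun_prop) (by fun_prop) (by simp) (by simp))
    (hlim continuous_const (by fun_prop) rfl (by simp)) ?_ ?_
  · filter_upwards [self_mem_nhdsWithin] with t (ht : 0 < t)
    exact eventually_crossoverConst_le_rescaledIntegral hα hb hΓ (by linarith) ht
  · filter_upwards [self_mem_nhdsWithin, nhdsWithin_le_nhds (eventually_lt_nhds hα)]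
      with t (ht : 0 < t) htα c hc
    exact eventually_rescaledIntegral_lt hα hb hΓ (by linarith) (by linarith) hc

/-- Gaussian-crossover asymptotic establishing the case β = 2 of Theorem 5.4 (eq. SS1). -/
theorem stmt_16 (b α Γ : ℝ) (hb : 0 < b) (hα : 0 < α) (hΓ : 0 < Γ) :
    Tendsto (fun u : ℝ => u ^ α * Real.log (1 / u) ^ (α / 2) *
        ∫ x in Set.Ioi Γ,
          (x ^ (1 + α) *
            (x ^ (1 + α) * Real.exp (-x ^ 2 / 2) / Real.sqrt (2 * Real.pi) + b * u ^ α))⁻¹)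
      (𝓝[>] 0) (𝓝 (1 / (α * b * (2 * α) ^ (α / 2)))) := by
  refine ((tendsto_rescaledIntegral hα hb hΓ).comp tendsto_log_one_div_nhdsGT_zero).congr' ?_
  filter_upwards [self_mem_nhdsWithin] with u (hu : 0 < u)
  have hpow : exp (-(α * log (1 / u))) = u ^ α := by
    rw [one_div, log_inv, rpow_def_of_pos hu]; ring_nf
  simp only [Function.comp, rescaledIntegral, crossoverIntegrand, gaussTerm, hpow]
end
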